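/- arXiv:1308.6621 — 5 statements merged into one kernel-verified Lean document; each statement's English description precedes it below -/
import Mathlib

section
/- If S = {2,m} is admissible (4 ≤ m ≤ n-1), then the number of signed permutations in B_n with peak set {2,m} equals [(m-3)·C(n-2,m-1) + (m-2)·C(n-2,m-2) - (n-2)]·2^{2n-3}. -/
open Finset

/-- Value at (1-indexed) position `i` of the signed permutation represented by a pair
`(σ, ε)`: the value is `±(σ(i)+1)`, negative iff `ε i = true`. Returns 0 out of range. -/
def bval (n : ℕ) (π : Equiv.Perm (Fin n) × (Fin n → Bool)) (i : ℕ) : ℤ :=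
  if h : i - 1 < n then
    (if π.2 ⟨i - 1, h⟩ then (-1 : ℤ) else 1) * (((π.1 ⟨i - 1, h⟩ : ℕ) : ℤ) + 1)
  else 0

/-- Peak set of a signed permutation: positions `i ∈ {2,…,n-1}` with `π_{i-1} < π_i > π_{i+1}`. -/
def bPeakSet (n : ℕ) (π : Equiv.Perm (Fin n) × (Fin n → Bool)) : Finset ℕ :=
  (Finset.Icc 2 (n - 1)).filter fun i =>
    bval n π (i - 1) < bval n π i ∧ bval n π (i + 1) < bval n π i

/-- `#P_B(S,n)`: number of signed permutations in `B_n` with peak set exactly `S`. -/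
def PB (n : ℕ) (S : Finset ℕ) : ℕ :=
  (Finset.univ.filter fun π : Equiv.Perm (Fin n) × (Fin n → Bool) => bPeakSet n π = S).card

/-- Value with the convention `π_0 = 0`. -/
def bvalHat (n : ℕ) (π : Equiv.Perm (Fin n) × (Fin n → Bool)) (i : ℕ) : ℤ :=
  if i = 0 then 0 else bval n π i

/-- Peak set with `π_0 = 0`: positions `i ∈ {1,…,n-1}` with `π_{i-1} < π_i > π_{i+1}`. -/
def bPeakSetHat (n : ℕ) (π : Equiv.Perm (Fin n) × (Fin n → Bool)) : Finset ℕ :=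
  (Finset.Icc 1 (n - 1)).filter fun i =>
    bvalHat n π (i - 1) < bvalHat n π i ∧ bvalHat n π (i + 1) < bvalHat n π i

/-- `#P̂_B(S,n)`: signed permutations with `π_0 = 0` prepended and peak set exactly `S`. -/
def PBhat (n : ℕ) (S : Finset ℕ) : ℕ :=
  (Finset.univ.filter fun π : Equiv.Perm (Fin n) × (Fin n → Bool) => bPeakSetHat n π = S).card

/-- Value at (1-indexed) position `i` of an ordinary permutation of `{1,…,n}`. -/
def sval (n : ℕ) (π : Equiv.Perm (Fin n)) (i : ℕ) : ℤ :=
  if h : i - 1 < n then ((π ⟨i - 1, h⟩ : ℕ) : ℤ) + 1 else 0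

/-- Peak set of an ordinary permutation: positions `i ∈ {2,…,n-1}`. -/
def sPeakSet (n : ℕ) (π : Equiv.Perm (Fin n)) : Finset ℕ :=
  (Finset.Icc 2 (n - 1)).filter fun i =>
    sval n π (i - 1) < sval n π i ∧ sval n π (i + 1) < sval n π i

/-- `#P(S,n)`: number of permutations of `{1,…,n}` with peak set exactly `S`. -/
def PP (n : ℕ) (S : Finset ℕ) : ℕ :=
  (Finset.univ.filter fun π : Equiv.Perm (Fin n) => sPeakSet n π = S).card

def svalHat (n : ℕ) (π : Equiv.Perm (Fin n)) (i : ℕ) : ℤ :=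
  if i = 0 then 0 else sval n π i

/-- Peak set with the convention `π_0 = 0`: positions `i ∈ {1,…,n-1}`. -/
def sPeakSetHat (n : ℕ) (π : Equiv.Perm (Fin n)) : Finset ℕ :=
  (Finset.Icc 1 (n - 1)).filter fun i =>
    svalHat n π (i - 1) < svalHat n π i ∧ svalHat n π (i + 1) < svalHat n π i

/-- `#P̂(S,n)`: permutations of `{1,…,n}` with `π_0 = 0` prepended and peak set exactly `S`. -/
def PPhat (n : ℕ) (S : Finset ℕ) : ℕ :=
  (Finset.univ.filter fun π : Equiv.Perm (Fin n) => sPeakSetHat n π = S).card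

/-!
Peaks only see the relative order of the letters, so attaching the signs to the values rather than
to the positions shows that each of the `2 ^ n` sign patterns contributes `#P(S, n)`:
`#P_B(S, n) = 2 ^ n * #P(S, n)`.

For ordinary permutations, remove the largest value. If it sits at position `q + 1`, the peak set is
that of the left factor, plus `q + 1` when both factors are nonempty, plus the peak set of the right
factor shifted by `q + 1`; choosing the values of the left factor gives a factor `C(n - 1, q)`.
As the largest value is a peak unless it sits at an end, only two or three positions contribute
when `S` is `∅`, `{r}` or `{2, m}`. The resulting recurrences are solved by induction:
`#P(∅, n) = 2 ^ (n - 1)`, `#P({r}, n) = (C(n - 1, r - 1) - 1) * 2 ^ (n - 2)`, and the stated formula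
for `#P({2, m}, n)`.
-/

section Word

variable {α β : Type*} [LinearOrder α] [LinearOrder β] {k : ℕ}

/-- Positions are 1-indexed, as in `sPeakSet`: `x` is a peak when the letter `w (x - 1)` exceeds
both of its neighbours. -/
def IsPeakAt (w : Fin k → α) (x : ℕ) : Prop :=
  ∃ h : x < k, 2 ≤ x ∧ w ⟨x - 2, by omega⟩ < w ⟨x - 1, by omega⟩ ∧ w ⟨x, h⟩ < w ⟨x - 1, by omega⟩

instance (w : Fin k → α) : DecidablePred (IsPeakAt w) := fun _ => by
  unfold IsPeakAt; infer_instance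

def peakSet (w : Fin k → α) : Finset ℕ := (range k).filter (IsPeakAt w)

@[simp]
theorem mem_peakSet {w : Fin k → α} {x : ℕ} : x ∈ peakSet w ↔ IsPeakAt w x := by
  simpa [peakSet] using fun h => h.1

theorem IsPeakAt.two_le {w : Fin k → α} {x : ℕ} (h : IsPeakAt w x) : 2 ≤ x := h.2.1

theorem IsPeakAt.lt {w : Fin k → α} {x : ℕ} (h : IsPeakAt w x) : x < k := h.1

theorem peakSet_comp_of_strictMono {f : α → β} (hf : StrictMono f) (w : Fin k → α) :
    peakSet (f ∘ w) = peakSet w := by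
  ext x
  simp only [mem_peakSet, IsPeakAt, Function.comp_apply, hf.lt_iff_lt]

theorem peakSet_eq_filter_Icc {w : Fin k → α} {g : ℕ → α}
    (hg : ∀ i (hi : i < k), g (i + 1) = w ⟨i, hi⟩) :
    peakSet w = (Icc 2 (k - 1)).filter fun x => g (x - 1) < g x ∧ g (x + 1) < g x := by
  ext x
  rw [mem_filter, mem_Icc, mem_peakSet]
  by_cases hx : 2 ≤ x ∧ x < k
  · obtain ⟨h2, hxk⟩ := hx
    have e₁ : g (x - 1) = w ⟨x - 2, by omega⟩ := by rw [← hg]; congr 1; omega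
    have e₂ : g x = w ⟨x - 1, by omega⟩ := by rw [← hg]; congr 1; omega
    rw [e₁, e₂, hg x hxk]
    exact ⟨fun h => ⟨⟨h2, by omega⟩, h.2.2⟩, fun h => ⟨hxk, h2, h.2⟩⟩
  · exact iff_of_false (fun h => hx ⟨h.two_le, h.lt⟩) (fun h => hx ⟨h.1.1, by omega⟩)

end Word

theorem sPeakSet_eq_peakSet (n : ℕ) (π : Equiv.Perm (Fin n)) : sPeakSet n π = peakSet π := by
  rw [← peakSet_comp_of_strictMono (f := fun v : Fin n => (v : ℤ) + 1)
    (fun a b h => by simpa using h), sPeakSet]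
  exact (peakSet_eq_filter_Icc fun i hi => by simp [sval, hi]).symm

theorem PP_eq_card_peakSet (n : ℕ) (S : Finset ℕ) :
    PP n S = #{σ : Equiv.Perm (Fin n) | peakSet σ = S} := by
  simp only [PP, sPeakSet_eq_peakSet]

theorem PP_eq_zero_of_mem {n x : ℕ} {S : Finset ℕ} (hx : x ∈ S) (h : x < 2 ∨ n ≤ x) :
    PP n S = 0 := by
  rw [PP, card_eq_zero, filter_eq_empty_iff]
  rintro π - rfl
  have := (mem_filter.mp hx).1
  simp only [mem_Icc] at this
  omega

theorem PP_zero_empty : PP 0 ∅ = 1 := by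
  simp [PP, sPeakSet]

theorem card_peakSet_comp_eq_PP {α : Type*} [LinearOrder α] {n : ℕ} {f : Fin n → α}
    (hf : Function.Injective f) (S : Finset ℕ) :
    #{σ : Equiv.Perm (Fin n) | peakSet (f ∘ σ) = S} = PP n S := by
  set τ := Tuple.sort f
  have hmono : StrictMono (f ∘ τ) :=
    (Tuple.monotone_sort f).strictMono_of_injective (hf.comp τ.injective)
  have hcomp : ∀ σ : Equiv.Perm (Fin n), f ∘ σ = (f ∘ τ) ∘ ⇑(τ⁻¹ * σ) := fun σ => by
    ext i; simp
  rw [PP_eq_card_peakSet]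
  refine card_equiv (Equiv.mulLeft τ⁻¹) fun σ => ?_
  simp [hcomp σ, peakSet_comp_of_strictMono hmono]

/-- The letter `bval` puts at a position holding the value `v`, once the signs `η` are attached to
the values rather than to the positions. -/
def signedValue {n : ℕ} (η : Fin n → Bool) (v : Fin n) : ℤ :=
  (if η v then -1 else 1) * ((v : ℕ) + 1)

theorem signedValue_injective {n : ℕ} (η : Fin n → Bool) :
    Function.Injective (signedValue η) := by
  intro a b h
  apply Fin.ext
  unfold signedValue at h
  split_ifs at h <;> omega

theorem bPeakSet_eq_peakSet {n : ℕ} (σ : Equiv.Perm (Fin n)) (η : Fin n → Bool) :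
    bPeakSet n (σ, η ∘ σ) = peakSet (signedValue η ∘ σ) :=
  (peakSet_eq_filter_Icc fun i hi => by simp [bval, signedValue, hi]).symm

theorem PB_eq_two_pow_mul_PP (n : ℕ) (S : Finset ℕ) : PB n S = 2 ^ n * PP n S := by
  have hshear : PB n S =
      #{p : Equiv.Perm (Fin n) × (Fin n → Bool) | peakSet (signedValue p.2 ∘ p.1) = S} := by
    refine card_equiv (Equiv.prodShear (Equiv.refl _) fun σ => σ.arrowCongr (Equiv.refl Bool))
      fun p => ?_
    obtain ⟨σ, ε⟩ := p
    have hε : σ.arrowCongr (Equiv.refl Bool) ε ∘ σ = ε := funext fun i => by simp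
    simp [← bPeakSet_eq_peakSet, hε]
  rw [hshear, card_filter, Fintype.sum_prod_type_right]
  simp_rw [← card_filter, card_peakSet_comp_eq_PP (signedValue_injective _)]
  simp

section MaxSplit

variable {α : Type*} [LinearOrder α]

/-- The largest letter of a word `u ++ [t] ++ v` with `|u| = q` and `|v| = r` is a peak, at position
`q + 1`, exactly when `u` and `v` are nonempty. -/
def maxPeak (q r : ℕ) : Finset ℕ := if 1 ≤ q ∧ 1 ≤ r then {q + 1} else ∅

theorem mem_maxPeak {q r x : ℕ} : x ∈ maxPeak q r ↔ 1 ≤ q ∧ 1 ≤ r ∧ x = q + 1 := by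
  unfold maxPeak
  split_ifs <;> simp <;> omega

@[simp]
theorem maxPeak_zero_left (r : ℕ) : maxPeak 0 r = ∅ := rfl

@[simp]
theorem maxPeak_zero_right (q : ℕ) : maxPeak q 0 = ∅ := by
  simp [maxPeak]

theorem maxPeak_of_pos {q r : ℕ} (hq : 1 ≤ q) (hr : 1 ≤ r) : maxPeak q r = {q + 1} :=
  if_pos ⟨hq, hr⟩

theorem isPeakAt_factor_iff {N m p : ℕ} {w : Fin N → α} {v : Fin m → α} (hpm : p + m ≤ N)
    (hv : ∀ j (hj : j < m), v ⟨j, hj⟩ = w ⟨p + j, by omega⟩) {y : ℕ} :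
    IsPeakAt v y ↔ 2 ≤ y ∧ y < m ∧ IsPeakAt w (p + y) := by
  constructor
  · rintro ⟨hy, h2, h1, h3⟩
    simp only [hv] at h1 h3
    refine ⟨h2, hy, by omega, by omega, ?_, ?_⟩
    · convert h1 using 3 <;> omega
    · convert h3 using 3; omega
  · rintro ⟨h2, hy, _, -, h1, h3⟩
    refine ⟨hy, h2, ?_, ?_⟩ <;> simp only [hv]
    · convert h1 using 3 <;> omega
    · convert h3 using 3; omega

theorem isPeakAt_of_strict_max {N x : ℕ} {w : Fin N → α} (hx : x < N) (h2 : 2 ≤ x)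
    (hmax : ∀ i : Fin N, (i : ℕ) ≠ x - 1 → w i < w ⟨x - 1, by omega⟩) : IsPeakAt w x :=
  ⟨hx, h2, hmax _ (by simp; omega), hmax _ (by simp; omega)⟩

theorem not_isPeakAt_of_strict_max {N x q : ℕ} {w : Fin N → α} (hq : q < N)
    (hmax : ∀ i : Fin N, (i : ℕ) ≠ q → w i < w ⟨q, hq⟩) (hx : x = q ∨ x = q + 2) :
    ¬ IsPeakAt w x := by
  rintro ⟨hxN, h2, h1, h3⟩
  rcases hx with rfl | rfl
  · exact (hmax _ (by simp; omega)).not_gt h3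
  · exact (hmax ⟨q + 1, by omega⟩ (by simp)).not_gt (by convert h1 using 3 <;> simp)

theorem peakSet_eq_of_strict_max {N m q : ℕ} {w : Fin N → α} (hq : q < N)
    (hmax : ∀ i : Fin N, (i : ℕ) ≠ q → w i < w ⟨q, hq⟩) {u : Fin q → α} {v : Fin m → α}
    (hm : q + 1 + m = N) (hu : ∀ i (hi : i < q), u ⟨i, hi⟩ = w ⟨i, by omega⟩)
    (hv : ∀ j (hj : j < m), v ⟨j, hj⟩ = w ⟨q + 1 + j, by omega⟩) :
    peakSet w = (peakSet u ∪ maxPeak q m) ∪ (peakSet v).image (· + (q + 1)) := by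
  have hu' (y : ℕ) := isPeakAt_factor_iff (p := 0) (w := w) (v := u) (by omega)
    (fun i hi => by simpa using hu i hi) (y := y)
  have hv' (y : ℕ) := isPeakAt_factor_iff (p := q + 1) (w := w) (v := v) (by omega) hv (y := y)
  ext x
  simp only [mem_union, mem_image, mem_peakSet, mem_maxPeak, hu', hv', zero_add]
  rcases lt_trichotomy x q with hxq | rfl | hqx
  · refine ⟨fun h => .inl (.inl ⟨h.two_le, hxq, h⟩), ?_⟩
    rintro ((⟨-, -, h⟩ | ⟨-, -, h⟩) | ⟨a, -, h⟩)
    exacts [h, by omega, by omega]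
  · refine iff_of_false (not_isPeakAt_of_strict_max hq hmax (.inl rfl)) ?_
    rintro ((⟨-, h, -⟩ | ⟨-, -, h⟩) | ⟨a, -, h⟩) <;> omega
  obtain rfl | rfl | hx := show x = q + 1 ∨ x = q + 2 ∨ q + 3 ≤ x by omega
  · refine ⟨fun h => .inl (.inr ⟨by have := h.two_le; omega, by have := h.lt; omega, rfl⟩), ?_⟩
    rintro ((⟨-, h, -⟩ | ⟨h1, h2, -⟩) | ⟨a, ⟨h, -⟩, h'⟩)
    · omega
    · exact isPeakAt_of_strict_max (by omega) (by omega) (by simpa using hmax)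
    · omega
  · refine iff_of_false (not_isPeakAt_of_strict_max hq hmax (.inr rfl)) ?_
    rintro ((⟨-, h, -⟩ | ⟨-, -, h⟩) | ⟨a, ⟨h, -⟩, h'⟩) <;> omega
  · refine ⟨fun h => .inr ⟨x - (q + 1), ⟨by omega, by have := h.lt; omega, ?_⟩, by omega⟩, ?_⟩
    · rwa [show q + 1 + (x - (q + 1)) = x by omega]
    · rintro ((⟨-, h, -⟩ | ⟨-, -, h⟩) | ⟨a, ⟨-, -, h⟩, rfl⟩)
      · omega
      · omega
      · rwa [show a + (q + 1) = q + 1 + a by omega]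

variable {q r : ℕ}

theorem eq_append_cons {β : Type*} (w : Fin (q + (r + 1)) → β) :
    w = Fin.append (w ∘ Fin.castAdd (r + 1))
      (Fin.cons (w (Fin.natAdd q 0)) (w ∘ Fin.natAdd q ∘ Fin.succ)) := by
  conv_lhs => rw [← Fin.append_castAdd_natAdd (f := w)]
  congr 1
  exact (Fin.cons_self_tail _).symm

theorem peakSet_eq_of_injective_of_le {w : Fin (q + (r + 1)) → α} (hw : Function.Injective w)
    (hmax : ∀ i, w i ≤ w (Fin.natAdd q 0)) :
    peakSet w = (peakSet (w ∘ Fin.castAdd (r + 1)) ∪ maxPeak q r) ∪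
      (peakSet (w ∘ Fin.natAdd q ∘ Fin.succ)).image (· + (q + 1)) :=
  peakSet_eq_of_strict_max (q := q) (by omega)
    (fun i hi => (hmax i).lt_of_ne (hw.ne (by simpa [Fin.ext_iff] using hi))) (by omega)
    (fun i hi => rfl) (fun j hj => congrArg w (Fin.ext (by simp; omega)))

end MaxSplit

theorem union_union_image_add_eq_iff {q : ℕ} {A A' B B' M : Finset ℕ}
    (hA : ∀ x ∈ A, x < q) (hA' : ∀ x ∈ A', x < q) (hB : ∀ x ∈ B, 2 ≤ x)
    (hB' : ∀ x ∈ B', 2 ≤ x) (hM : ∀ x ∈ M, x = q + 1) :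
    (A ∪ M) ∪ B.image (· + (q + 1)) = (A' ∪ M) ∪ B'.image (· + (q + 1)) ↔ A = A' ∧ B = B' := by
  have hfilter : ∀ {A B : Finset ℕ}, (∀ x ∈ A, x < q) → (∀ x ∈ B, 2 ≤ x) →
      ((A ∪ M) ∪ B.image (· + (q + 1))).filter (· < q) = A ∧
      ((A ∪ M) ∪ B.image (· + (q + 1))).filter (q + 2 < ·) = B.image (· + (q + 1)) := by
    intro A B hA hB
    constructor <;> ext x <;> simp only [mem_filter, mem_union, mem_image] <;> constructor
    · rintro ⟨(h | h) | ⟨b, hb, rfl⟩, hx⟩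
      · exact h
      · have := hM x h; omega
      · omega
    · exact fun h => ⟨.inl (.inl h), hA x h⟩
    · rintro ⟨(h | h) | h, hx⟩
      · have := hA x h; omega
      · have := hM x h; omega
      · exact h
    · rintro ⟨b, hb, rfl⟩
      exact ⟨.inr ⟨b, hb, rfl⟩, by have := hB b hb; omega⟩
  refine ⟨fun h => ⟨?_, ?_⟩, by rintro ⟨rfl, rfl⟩; rfl⟩
  · rw [← (hfilter hA hB).1, h, (hfilter hA' hB').1]
  · apply image_injective (add_left_injective (q + 1))
    rw [← (hfilter hA hB).2, h, (hfilter hA' hB').2]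

/-- A word with image `T` is `T.orderEmbOfFin hT ∘ σ` for a unique permutation `σ`. -/
theorem card_injective_words_image_peakSet {n k : ℕ} {T : Finset (Fin n)} (hT : #T = k)
    (S : Finset ℕ) :
    #((univ : Finset (Fin k → Fin n)).filter fun w =>
        Function.Injective w ∧ univ.image w = T ∧ peakSet w = S) = PP k S := by
  set e := T.orderEmbOfFin hT
  rw [PP_eq_card_peakSet]
  refine (card_bij (fun (σ : Equiv.Perm (Fin k)) _ => ⇑e ∘ ⇑σ) ?_ ?_ ?_).symm
  · intro σ hσ
    simp only [mem_filter, mem_univ, true_and] at hσ ⊢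
    refine ⟨e.injective.comp σ.injective, ?_, by rw [peakSet_comp_of_strictMono e.strictMono, hσ]⟩
    apply coe_injective
    rw [coe_image, coe_univ, Set.image_univ, Set.range_comp, σ.range_eq_univ, Set.image_univ,
      range_orderEmbOfFin]
  · intro σ₁ _ σ₂ _ h
    exact Equiv.ext fun i => e.injective (congrFun h i)
  · intro w hw
    simp only [mem_filter, mem_univ, true_and] at hw
    obtain ⟨hinj, hwT, hS⟩ := hw
    obtain ⟨g, rfl⟩ : ∃ g, w = e ∘ g := Set.range_subset_range_iff_exists_comp.mp (by
      rw [range_orderEmbOfFin, ← hwT, coe_image, coe_univ, Set.image_univ])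
    refine ⟨Equiv.ofBijective g (Finite.injective_iff_bijective.mp hinj.of_comp), ?_, rfl⟩
    simpa [← peakSet_comp_of_strictMono e.strictMono] using hS

theorem card_injective_words_peakSet {n : ℕ} (V : Finset (Fin n)) (k : ℕ) (S : Finset ℕ) :
    #((univ : Finset (Fin k → Fin n)).filter fun w =>
        Function.Injective w ∧ (∀ i, w i ∈ V) ∧ peakSet w = S) = (#V).choose k * PP k S := by
  rw [card_eq_sum_card_fiberwise (f := fun w : Fin k → Fin n => univ.image w)
    (t := V.powersetCard k), ← card_powersetCard, ← smul_eq_mul, ← sum_const]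
  · refine sum_congr rfl fun T hT => ?_
    obtain ⟨hTV, hTk⟩ := mem_powersetCard.mp hT
    rw [← card_injective_words_image_peakSet hTk S, filter_filter]
    refine congrArg card (filter_congr fun w _ => ⟨?_, ?_⟩)
    · rintro ⟨⟨hinj, -, hS⟩, hwT⟩
      exact ⟨hinj, hwT, hS⟩
    · rintro ⟨hinj, rfl, hS⟩
      exact ⟨⟨hinj, fun i => hTV (mem_image_of_mem w (mem_univ i)), hS⟩, rfl⟩
  · intro w hw
    obtain ⟨-, hinj, hV, -⟩ := mem_filter.mp hw
    rw [mem_coe, mem_powersetCard, card_image_of_injective _ hinj, card_univ, Fintype.card_fin]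
    refine ⟨fun x hx => ?_, rfl⟩
    obtain ⟨i, -, rfl⟩ := mem_image.mp hx
    exact hV i

section PermSplit

variable {q r : ℕ}

theorem exists_perm_coe_eq_append_cons {u : Fin q → Fin (q + (r + 1))}
    {v : Fin r → Fin (q + (r + 1))} (hu : Function.Injective u) (hv : Function.Injective v)
    (hu_last : ∀ i, u i ≠ Fin.last (q + r)) (hv_last : ∀ j, v j ≠ Fin.last (q + r))
    (huv : ∀ i j, u i ≠ v j) :
    ∃ π : Equiv.Perm (Fin (q + (r + 1))), ⇑π = Fin.append u (Fin.cons (Fin.last (q + r)) v) := by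
  have hw : Function.Injective (Fin.append u (Fin.cons (Fin.last (q + r)) v)) :=
    Fin.append_injective_iff.mpr ⟨hu, Fin.cons_injective_iff.mpr
      ⟨fun ⟨j, hj⟩ => hv_last j hj, hv⟩, fun i j => Fin.cases (hu_last i) (fun j => huv i j) j⟩
  exact ⟨Equiv.ofBijective _ (Finite.injective_iff_bijective.mp hw), rfl⟩

theorem card_perm_last_at_comp_castAdd_eq {u : Fin q → Fin (q + (r + 1))}
    (hu : Function.Injective u) (hlast : ∀ i, u i ≠ Fin.last (q + r)) (S : Finset ℕ) :
    #{π : Equiv.Perm (Fin (q + (r + 1))) | π (Fin.natAdd q 0) = Fin.last (q + r) ∧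
        ⇑π ∘ Fin.castAdd (r + 1) = u ∧ peakSet (⇑π ∘ Fin.natAdd q ∘ Fin.succ) = S} = PP r S := by
  set V := (univ.erase (Fin.last (q + r))) \ univ.image u
  have hV : #V = r := by
    rw [card_sdiff_of_subset, card_erase_of_mem (mem_univ _), card_image_of_injective _ hu]
    · simp
    · intro x hx
      obtain ⟨i, -, rfl⟩ := mem_image.mp hx
      exact mem_erase.mpr ⟨hlast i, mem_univ _⟩
  have hcount := card_injective_words_peakSet V r S
  rw [hV, Nat.choose_self, one_mul] at hcount
  rw [← hcount]
  refine card_bij (fun π _ => ⇑π ∘ Fin.natAdd q ∘ Fin.succ) ?_ ?_ ?_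
  · intro π hπ
    simp only [mem_filter, mem_univ, true_and] at hπ ⊢
    obtain ⟨htop, rfl, hS⟩ := hπ
    refine ⟨π.injective.comp ((Fin.natAdd_injective _ _).comp (Fin.succ_injective _)),
      fun j => ?_, hS⟩
    simp only [V, mem_sdiff, mem_erase, mem_image, mem_univ, and_true, true_and, ← htop,
      Function.comp_apply]
    refine ⟨π.injective.ne (by simp [Fin.ext_iff]), fun ⟨i, hi⟩ => ?_⟩
    exact absurd (π.injective hi) (by simp [Fin.ext_iff]; omega)
  · intro π₁ hπ₁ π₂ hπ₂ h
    simp only [mem_filter, mem_univ, true_and] at hπ₁ hπ₂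
    apply Equiv.coe_fn_injective
    change ⇑π₁ = ⇑π₂
    rw [eq_append_cons ⇑π₁, eq_append_cons ⇑π₂, hπ₁.2.1, hπ₂.2.1, hπ₁.1, hπ₂.1]
    exact congrArg _ (congrArg _ h)
  · intro v hv
    simp only [V, mem_filter, mem_univ, true_and, mem_sdiff, mem_erase, mem_image, and_true,
      not_exists] at hv
    obtain ⟨hvinj, hvV, hS⟩ := hv
    obtain ⟨π, hπ⟩ := exists_perm_coe_eq_append_cons hu hvinj hlast (fun j => (hvV j).1)
      (fun i j => (hvV j).2 i)
    have hright : ⇑π ∘ Fin.natAdd q ∘ Fin.succ = v := funext fun j => by simp [hπ]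
    refine ⟨π, ?_, hright⟩
    simp only [mem_filter, mem_univ, true_and]
    exact ⟨by simp [hπ], funext fun i => by simp [hπ], hright ▸ hS⟩

theorem card_perm_last_at_peakSet (S₁ S₂ : Finset ℕ) :
    #{π : Equiv.Perm (Fin (q + (r + 1))) | π (Fin.natAdd q 0) = Fin.last (q + r) ∧
        peakSet (⇑π ∘ Fin.castAdd (r + 1)) = S₁ ∧ peakSet (⇑π ∘ Fin.natAdd q ∘ Fin.succ) = S₂}
      = (q + r).choose q * (PP q S₁ * PP r S₂) := by
  set U := (univ : Finset (Fin q → Fin (q + (r + 1)))).filter fun u =>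
    Function.Injective u ∧ (∀ i, u i ∈ univ.erase (Fin.last (q + r))) ∧ peakSet u = S₁
  have hU : #U = (q + r).choose q * PP q S₁ := by
    rw [card_injective_words_peakSet, card_erase_of_mem (mem_univ _)]
    simp
  rw [card_eq_sum_card_fiberwise (f := fun π : Equiv.Perm _ => ⇑π ∘ Fin.castAdd (r + 1)) (t := U),
    sum_congr rfl (g := fun _ => PP r S₂), sum_const, smul_eq_mul, hU, mul_assoc]
  · intro u hu
    obtain ⟨-, hinj, huV, huS⟩ := mem_filter.mp hu
    rw [filter_filter, ← card_perm_last_at_comp_castAdd_eq hinj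
      (fun i => (mem_erase.mp (huV i)).1) S₂]
    refine congrArg card (filter_congr fun π _ => ⟨?_, ?_⟩)
    · rintro ⟨⟨htop, -, hS⟩, rfl⟩
      exact ⟨htop, rfl, hS⟩
    · rintro ⟨htop, rfl, hS⟩
      exact ⟨⟨htop, huS, hS⟩, rfl⟩
  · intro π hπ
    obtain ⟨-, htop, hS, -⟩ := mem_filter.mp hπ
    refine mem_filter.mpr ⟨mem_univ _, π.injective.comp (Fin.castAdd_injective _ _),
      fun i => mem_erase.mpr ⟨?_, mem_univ _⟩, hS⟩
    rw [← htop]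
    exact π.injective.ne (by simp [Fin.ext_iff]; omega)

end PermSplit

/-- `j` is a 0-indexed position, while peak positions are 1-indexed. -/
def PPmaxAt (n j : ℕ) (S : Finset ℕ) : ℕ :=
  #{π : Equiv.Perm (Fin (n + 1)) | (π.symm (Fin.last n) : ℕ) = j ∧ peakSet π = S}

theorem PP_succ_eq_sum_PPmaxAt (n : ℕ) (S : Finset ℕ) :
    PP (n + 1) S = ∑ j ∈ range (n + 1), PPmaxAt n j S := by
  rw [PP_eq_card_peakSet, card_eq_sum_card_fiberwise
    (f := fun π : Equiv.Perm (Fin (n + 1)) => (π.symm (Fin.last n) : ℕ)) (t := range (n + 1))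
    (fun π _ => mem_range.mpr (π.symm (Fin.last n)).2)]
  refine sum_congr rfl fun j _ => ?_
  rw [PPmaxAt, filter_filter]
  simp only [and_comm]

theorem PP_succ_eq_sum_of_PPmaxAt_eq_zero {n : ℕ} {S : Finset ℕ} (T : Finset ℕ)
    (hT : T ⊆ range (n + 1)) (h : ∀ j < n + 1, j ∉ T → PPmaxAt n j S = 0) :
    PP (n + 1) S = ∑ j ∈ T, PPmaxAt n j S := by
  rw [PP_succ_eq_sum_PPmaxAt]
  exact (sum_subset hT fun j hj hjT => h j (mem_range.mp hj) hjT).symm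

theorem PPmaxAt_eq_zero {n j : ℕ} {S : Finset ℕ}
    (h : j ∈ S ∨ j + 2 ∈ S ∨ (1 ≤ j ∧ j < n ∧ j + 1 ∉ S)) : PPmaxAt n j S = 0 := by
  rw [PPmaxAt, card_eq_zero, filter_eq_empty_iff]
  rintro π - ⟨rfl, rfl⟩
  set q := ((π.symm (Fin.last n)) : ℕ)
  have hq : q < n + 1 := (π.symm (Fin.last n)).2
  have hmax : ∀ i : Fin (n + 1), (i : ℕ) ≠ q → π i < π ⟨q, hq⟩ := fun i hi => by
    rw [show (⟨q, hq⟩ : Fin (n + 1)) = π.symm (Fin.last n) from rfl, π.apply_symm_apply]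
    exact (Fin.le_last _).lt_of_ne (fun h => hi (by simp [q, ← h]))
  rcases h with h | h | ⟨h1, h2, h3⟩
  · exact not_isPeakAt_of_strict_max hq hmax (.inl rfl) (mem_peakSet.mp h)
  · exact not_isPeakAt_of_strict_max hq hmax (.inr rfl) (mem_peakSet.mp h)
  · exact h3 (mem_peakSet.mpr (isPeakAt_of_strict_max (by omega) (by omega) (by simpa using hmax)))

theorem PPmaxAt_eq {n q r : ℕ} (hn : q + r = n) {S S₁ S₂ : Finset ℕ} (h₁ : ∀ x ∈ S₁, x < q)
    (h₂ : ∀ x ∈ S₂, 2 ≤ x) (hS : S = (S₁ ∪ maxPeak q r) ∪ S₂.image (· + (q + 1))) :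
    PPmaxAt n q S = n.choose q * (PP q S₁ * PP r S₂) := by
  subst hn hS
  rw [← card_perm_last_at_peakSet, PPmaxAt]
  have htop (π : Equiv.Perm (Fin (q + (r + 1)))) :
      (π.symm (Fin.last (q + r)) : ℕ) = q ↔ π (Fin.natAdd q 0) = Fin.last (q + r) := by
    rw [← Equiv.eq_symm_apply, Fin.ext_iff]
    exact eq_comm
  refine congrArg card (filter_congr fun π _ => ?_)
  rw [htop π]
  refine and_congr_right fun hπ => ?_
  rw [peakSet_eq_of_injective_of_le (q := q) (r := r) π.injective (fun i => hπ ▸ Fin.le_last _)]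
  exact union_union_image_add_eq_iff (fun x hx => (mem_peakSet.mp hx).lt) h₁
    (fun x hx => (mem_peakSet.mp hx).two_le) h₂ (fun x hx => (mem_maxPeak.mp hx).2.2)

theorem PP_succ_empty (n : ℕ) : PP (n + 1) ∅ = 2 ^ n := by
  induction n with
  | zero =>
    rw [PP_succ_eq_sum_PPmaxAt, sum_range_one,
      PPmaxAt_eq (q := 0) (r := 0) (S₁ := ∅) (S₂ := ∅) rfl (by simp) (by simp) (by simp),
      PP_zero_empty]
    rfl
  | succ n ih =>
    rw [PP_succ_eq_sum_of_PPmaxAt_eq_zero {0, n + 1} (by intro j; simp; omega)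
      (fun j _ hj => PPmaxAt_eq_zero (by simp at hj ⊢; omega)), sum_pair (by omega),
      PPmaxAt_eq (S₁ := ∅) (S₂ := ∅) (zero_add _) (by simp) (by simp) (by simp),
      PPmaxAt_eq (S₁ := ∅) (S₂ := ∅) (add_zero _) (by simp) (by simp) (by simp), ih,
      PP_zero_empty, Nat.choose_zero_right, Nat.choose_self]
    ring

theorem PP_singleton_succ {n t : ℕ} (ht : t + 1 ≤ n) :
    PP (n + 2) {t + 2} = PP (n + 1) {t + 1} + (n + 1).choose (t + 1) * (PP (t + 1) ∅ * PP (n - t) ∅)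
      + PP (n + 1) {t + 2} := by
  rw [PP_succ_eq_sum_of_PPmaxAt_eq_zero {0, t + 1, n + 1} (by intro j; simp; omega)
    (fun j _ hj => PPmaxAt_eq_zero (by simp at hj ⊢; omega)), sum_insert (by simp),
    sum_pair (by omega)]
  have h₀ : PPmaxAt (n + 1) 0 {t + 2} = PP (n + 1) {t + 1} := by
    rcases Nat.eq_zero_or_pos t with rfl | ht₀
    · rw [PPmaxAt_eq_zero (by simp), PP_eq_zero_of_mem (mem_singleton_self 1) (by omega)]
    · rw [PPmaxAt_eq (S₁ := ∅) (S₂ := {t + 1}) (zero_add _) (by simp) (by simp; omega) (by simp),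
        PP_zero_empty]
      simp
  have h₁ : PPmaxAt (n + 1) (t + 1) {t + 2}
      = (n + 1).choose (t + 1) * (PP (t + 1) ∅ * PP (n - t) ∅) :=
    PPmaxAt_eq (by omega) (by simp) (by simp)
      (by simp [maxPeak_of_pos le_add_self (by omega : 1 ≤ n - t)])
  have h₂ : PPmaxAt (n + 1) (n + 1) {t + 2} = PP (n + 1) {t + 2} := by
    rcases (by omega : t + 2 < n + 1 ∨ t + 2 = n + 1) with h | h
    · rw [PPmaxAt_eq (S₁ := {t + 2}) (S₂ := ∅) (add_zero _) (by simp; omega) (by simp) (by simp),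
        PP_zero_empty]
      simp
    · rw [PPmaxAt_eq_zero (by simp; omega), PP_eq_zero_of_mem (mem_singleton_self _) (by omega)]
  rw [h₀, h₁, h₂, add_assoc]

theorem PP_pair_succ (p d : ℕ) :
    PP (p + d + 4 + 1) {2, p + 4} = (p + d + 4) * PP (p + d + 3) {p + 2}
      + (p + d + 4).choose (p + 3) * (PP (p + 3) {2} * PP (d + 1) ∅)
      + PP (p + d + 4) {2, p + 4} := by
  rw [PP_succ_eq_sum_of_PPmaxAt_eq_zero {1, p + 3, p + d + 4} (by intro j; simp; omega)
    (fun j _ hj => PPmaxAt_eq_zero (by simp at hj ⊢; omega)), sum_insert (by simp),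
    sum_pair (by omega)]
  have h₁ : PPmaxAt (p + d + 4) 1 {2, p + 4} = (p + d + 4) * PP (p + d + 3) {p + 2} := by
    rw [PPmaxAt_eq (S₁ := ∅) (S₂ := {p + 2}) (by omega : 1 + (p + d + 3) = _) (by simp)
      (by simp) (by ext; simp [maxPeak_of_pos le_rfl (by omega : 1 ≤ p + d + 3)]),
      ← zero_add 1, PP_succ_empty]
    simp
  have h₂ : PPmaxAt (p + d + 4) (p + 3) {2, p + 4}
      = (p + d + 4).choose (p + 3) * (PP (p + 3) {2} * PP (d + 1) ∅) :=
    PPmaxAt_eq (by omega) (by simp) (by simp)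
      (by ext; simp [maxPeak_of_pos (by omega : 1 ≤ p + 3) (by omega : 1 ≤ d + 1)])
  have h₃ : PPmaxAt (p + d + 4) (p + d + 4) {2, p + 4} = PP (p + d + 4) {2, p + 4} := by
    rcases Nat.eq_zero_or_pos d with rfl | hd
    · rw [PPmaxAt_eq_zero (by simp), PP_eq_zero_of_mem (by simp : p + 4 ∈ ({2, p + 4} : Finset ℕ))
        (by omega)]
    · rw [PPmaxAt_eq (S₁ := {2, p + 4}) (S₂ := ∅) (add_zero _) (by simp; omega) (by simp)
        (by simp), PP_zero_empty]
      simp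
  rw [h₁, h₂, h₃, ← add_assoc]

theorem PP_singleton {n s : ℕ} (hs : s ≤ n + 1) :
    (PP (n + 2) {s + 1} : ℤ) = ((n + 1).choose s - 1) * 2 ^ n := by
  induction n generalizing s with
  | zero =>
    have : PP 2 {s + 1} = 0 := PP_eq_zero_of_mem (mem_singleton_self _) (by omega)
    interval_cases s <;> simp [this]
  | succ n ih =>
    obtain rfl | rfl | ⟨hs₁, hs₂⟩ : s = 0 ∨ s = n + 2 ∨ 1 ≤ s ∧ s ≤ n + 1 := by omega
    · simp [PP_eq_zero_of_mem (mem_singleton_self 1) (by omega)]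
    · simp [PP_eq_zero_of_mem (mem_singleton_self (n + 1 + 1 + 1)) (.inr le_rfl)]
    obtain ⟨t, rfl⟩ : ∃ t, s = t + 1 := ⟨s - 1, by omega⟩
    obtain ⟨e, rfl⟩ : ∃ e, n = t + e := ⟨n - t, by omega⟩
    have hrec := PP_singleton_succ (n := t + e + 1) (t := t) (by omega)
    rw [show t + e + 1 - t = e + 1 by omega, PP_succ_empty, PP_succ_empty] at hrec
    rw [show t + 1 + 1 = t + 2 from rfl, hrec, show t + e + 1 + 1 = t + e + 2 from rfl,
      Nat.choose_succ_succ']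
    push_cast [ih (s := t) (by omega), ih (s := t + 1) (by omega)]
    ring

theorem PP_pair (p d : ℕ) :
    (PP (p + d + 4) {2, p + 4} : ℤ) = ((p + 1) * (p + d + 2).choose (p + 3)
      + (p + 2) * (p + d + 2).choose (p + 2) - (p + d + 2)) * 2 ^ (p + d + 1) := by
  induction d with
  | zero =>
    rw [PP_eq_zero_of_mem (by simp : p + 4 ∈ ({2, p + 4} : Finset ℕ)) (.inr (by omega)),
      Nat.choose_eq_zero_of_lt (by omega), add_zero, Nat.choose_self]
    simp
  | succ d ih =>
    have hA : (PP (p + d + 3) {p + 2} : ℤ) = ((p + d + 2).choose (p + 1) - 1) * 2 ^ (p + d + 1) :=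
      PP_singleton (n := p + d + 1) (s := p + 1) (by omega)
    have hB : (PP (p + 3) {2} : ℤ) = ((p + 2).choose 1 - 1) * 2 ^ (p + 1) :=
      PP_singleton (n := p + 1) (s := 1) (by omega)
    have habs :
        ((p + d + 2).choose (p + 2) : ℤ) * (p + 2) = (p + d + 2).choose (p + 1) * (d + 1) := by
      have := Nat.choose_succ_right_eq (p + d + 2) (p + 1)
      rw [show p + d + 2 - (p + 1) = d + 1 by omega] at this
      exact_mod_cast this
    have h₁ : (p + d + 3).choose (p + 3) =
        (p + d + 2).choose (p + 2) + (p + d + 2).choose (p + 3) :=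
      Nat.choose_succ_succ' _ _
    have h₂ : (p + d + 3).choose (p + 2) =
        (p + d + 2).choose (p + 1) + (p + d + 2).choose (p + 2) :=
      Nat.choose_succ_succ' _ _
    have h₃ : (p + d + 4).choose (p + 3) =
        (p + d + 3).choose (p + 2) + (p + d + 3).choose (p + 3) :=
      Nat.choose_succ_succ' _ _
    rw [show p + (d + 1) + 4 = p + d + 4 + 1 from rfl, PP_pair_succ, PP_succ_empty,
      show p + (d + 1) + 2 = p + d + 3 from rfl, show p + (d + 1) + 1 = p + d + 2 from rfl]
    push_cast [hA, hB, ih, h₁, h₂, h₃, Nat.choose_one_right]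
    -- after Pascal's rule, the step is the absorption identity `habs`
    linear_combination (-(2 : ℤ) ^ (p + d + 1)) * habs

/-- `#P_B({2,m},n) = ((m-3)C(n-2,m-1) + (m-2)C(n-2,m-2) - (n-2))·2^(2n-3)`. -/
theorem stmt7 (n m : ℕ) (h4 : 4 ≤ m) (hm : m ≤ n - 1) :
    (PB n {2, m} : ℤ)
      = (((m : ℤ) - 3) * Nat.choose (n - 2) (m - 1)
          + ((m : ℤ) - 2) * Nat.choose (n - 2) (m - 2) - ((n : ℤ) - 2)) * 2 ^ (2 * n - 3) := by
  obtain ⟨p, rfl⟩ : ∃ p, m = p + 4 := ⟨m - 4, by omega⟩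
  obtain ⟨d, rfl⟩ : ∃ d, n = p + d + 4 := ⟨n - (p + 4), by omega⟩
  rw [PB_eq_two_pow_mul_PP, Nat.cast_mul, PP_pair, show p + d + 4 - 2 = p + d + 2 by omega,
    show p + 4 - 1 = p + 3 by omega, show p + 4 - 2 = p + 2 by omega,
    show 2 * (p + d + 4) - 3 = (p + d + 4) + (p + d + 1) by omega, pow_add]
  push_cast
  ring
end

section
/- The number of signed permutations π ∈ B_n with π_0 = 0 prepended having empty peak set equals (3^n + 1)/2. -/
open Finset

/-!
With `π₀ = 0`, a signed permutation has no peak exactly when `0, π₁, …, πₙ` falls strictly up to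
some position `k` and then rises strictly, so that `π₁, …, π_k` are negative. Such a permutation
is determined by recording, for every absolute value, whether it lies in the falling run, or in
the rising run and with which sign: the two runs are then sorted. The only constraint is at the
junction `π_k < π_{k+1}`: every negative entry of the rising run must be smaller in absolute
value than some entry of the falling run. Among these labellings of `1, …, n + 1`, the largest
value is either in the falling run, leaving the other labels free, or positive in the rising run,
so `L (n + 1) = 3 ^ n + L n` and `2 L n = 3 ^ n + 1`.
-/

section Valley

variable {α : Type*} [LinearOrder α] {a : ℕ → α} {n k : ℕ}

def IsValley (a : ℕ → α) (n k : ℕ) : Prop :=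
  k ≤ n ∧ StrictAntiOn a (Set.Iic k) ∧ StrictMonoOn a (Set.Icc k n)

theorem IsValley.congr {b : ℕ → α} (h : IsValley a n k) (hab : ∀ i ≤ n, a i = b i) :
    IsValley b n k :=
  ⟨h.1, h.2.1.congr fun i hi => hab i (le_trans hi h.1), h.2.2.congr fun i hi => hab i hi.2⟩

theorem IsValley.lt_iff (h : IsValley a n k) {i : ℕ} (hi : i < n) : a (i + 1) < a i ↔ i < k := by
  refine ⟨fun hlt => not_le.1 fun hki => ?_, fun hik => ?_⟩
  · exact (h.2.2 ⟨hki, hi.le⟩ ⟨by omega, hi⟩ (Nat.lt_succ_self i)).not_gt hlt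
  · exact h.2.1 (Set.mem_Iic.2 hik.le) (Set.mem_Iic.2 hik) (Nat.lt_succ_self i)

theorem IsValley.lt_apply_zero (h : IsValley a n k) {i : ℕ} (hi : 0 < i) (hik : i ≤ k) :
    a i < a 0 :=
  h.2.1 (Set.mem_Iic.2 (Nat.zero_le k)) (Set.mem_Iic.2 hik) hi

theorem IsValley.strictAntiOn_succ (h : IsValley a n k) :
    StrictAntiOn (fun q => a (q + 1)) (Set.Ico 0 k) :=
  fun i hi j hj hij => h.2.1 (Set.mem_Iic.2 hi.2) (Set.mem_Iic.2 hj.2) (by omega)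

theorem IsValley.strictMonoOn_succ (h : IsValley a n k) :
    StrictMonoOn (fun q => a (q + 1)) (Set.Ico k n) :=
  fun i hi j hj hij => h.2.2 ⟨by have := hi.1; omega, hi.2⟩ ⟨by have := hj.1; omega, hj.2⟩
    (by omega)

theorem IsValley.not_peak (h : IsValley a n k) {i : ℕ} (hi : i + 1 < n) :
    ¬(a i < a (i + 1) ∧ a (i + 2) < a (i + 1)) := by
  rintro ⟨hup, hdown⟩
  have hki : k ≤ i := not_lt.1 fun hik => ((h.lt_iff (by omega)).2 hik).not_gt hup
  exact absurd ((h.lt_iff hi).1 hdown) (by omega)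

theorem exists_isValley (hne : ∀ i < n, a i ≠ a (i + 1))
    (hpeak : ∀ i, i + 1 < n → ¬(a i < a (i + 1) ∧ a (i + 2) < a (i + 1))) :
    ∃ k, IsValley a n k := by
  classical
  have hex : ∃ k, k = n ∨ k < n ∧ a k < a (k + 1) := ⟨n, Or.inl rfl⟩
  set k := Nat.find hex
  have hkn : k ≤ n := Nat.find_min' hex (Or.inl rfl)
  have hdown : ∀ i < k, a (i + 1) < a i := fun i hik => by
    have := Nat.find_min hex hik
    push Not at this
    exact lt_of_le_of_ne (this.2 (by omega)) (hne i (by omega)).symm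
  have hup : ∀ i, k ≤ i → i < n → a i < a (i + 1) := by
    intro i hki
    induction i, hki using Nat.le_induction with
    | base => exact fun hkn => ((Nat.find_spec hex).resolve_left (by omega)).2
    | succ i hki ih =>
      intro hin
      exact lt_of_le_of_ne (not_lt.1 fun h => hpeak i hin ⟨ih (by omega), h⟩) (hne (i + 1) hin)
  exact ⟨k, hkn, strictAntiOn_of_add_one_lt Set.ordConnected_Iic fun i _ _ hi => hdown i hi,
    strictMonoOn_of_lt_add_one Set.ordConnected_Icc fun i _ hi hi' => hup i hi.1 hi'.2⟩

end Valley

theorem Finset.orderEmbOfFin_eq_of_eq_image {α : Type*} [LinearOrder α] {s : Finset α}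
    {g : ℕ → α} {m l c : ℕ} (hg : StrictMonoOn g (Set.Ico m l)) (hs : s = (Ico m l).image g)
    (h : #s = c) (q : Fin c) : s.orderEmbOfFin h q = g (m + q) := by
  subst hs
  obtain rfl : c = l - m := by
    rw [← h, card_image_of_injOn (by rw [coe_Ico]; exact hg.injOn), Nat.card_Ico]
  have hmem : ∀ q : Fin (l - m), m + q ∈ Set.Ico m l := fun q => ⟨by omega, by omega⟩
  have := orderEmbOfFin_unique h (f := fun q => g (m + q))
    (fun q => mem_image_of_mem g (mem_coe.1 (by simpa using hmem q)))
    (fun q q' hqq' => hg (hmem q) (hmem q') (by simpa using hqq'))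
  exact (congrFun this q).symm

/-- Index `v` stands for the absolute value `v + 1`; label `2` puts it in the falling run, `0` and
`1` in the rising run with sign `+` and `-`. -/
def valleyLabelings (n : ℕ) : Finset (Fin n → Fin 3) :=
  {f | ∀ v, f v = 1 → ∃ w, v < w ∧ f w = 2}

theorem snoc_mem_valleyLabelings_iff {n : ℕ} (g : Fin n → Fin 3) (c : Fin 3) :
    Fin.snoc g c ∈ valleyLabelings (n + 1) ↔ c = 2 ∨ c = 0 ∧ g ∈ valleyLabelings n := by
  simp only [valleyLabelings, mem_filter, mem_univ, true_and, Fin.forall_fin_succ',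
    Fin.exists_fin_succ', Fin.snoc_castSucc, Fin.snoc_last, Fin.castSucc_lt_castSucc_iff,
    Fin.castSucc_lt_last, not_lt_of_ge (Fin.le_last _), false_and, or_false]
  fin_cases c <;> simp

theorem card_valleyLabelings_succ (n : ℕ) :
    #(valleyLabelings (n + 1)) = 3 ^ n + #(valleyLabelings n) := by
  have : valleyLabelings (n + 1) =
      ({2} ×ˢ univ ∪ {0} ×ˢ valleyLabelings n).map (Fin.snocEquiv fun _ => Fin 3).toEmbedding := by
    ext f
    obtain ⟨⟨c, g⟩, rfl⟩ := (Fin.snocEquiv fun _ => Fin 3).surjective f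
    rw [mem_map_equiv, Equiv.symm_apply_apply]
    exact (snoc_mem_valleyLabelings_iff g c).trans (by simp [eq_comm, and_comm])
  rw [this, card_map, card_union_of_disjoint (by simp [disjoint_left]), card_product,
    card_product]
  simp

theorem two_mul_card_valleyLabelings (n : ℕ) : 2 * #(valleyLabelings n) = 3 ^ n + 1 := by
  induction n with
  | zero => decide
  | succ n ih => rw [card_valleyLabelings_succ, mul_add, ih, pow_succ]; ring

section LabelValue

variable {n : ℕ} {f g : Fin n → Fin 3} {v : Fin n}

def labelValue (f : Fin n → Fin 3) (v : Fin n) : ℤ := if f v = 0 then v + 1 else -(v + 1)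

theorem eq_labelValue_iff {x : ℤ} : x = labelValue f v ↔ x.natAbs = v + 1 ∧ (0 < x ↔ f v = 0) := by
  unfold labelValue; split_ifs with h <;> simp only [h, iff_true, iff_false] <;> omega

theorem natAbs_labelValue : (labelValue f v).natAbs = v + 1 :=
  (eq_labelValue_iff.1 rfl).1

theorem labelValue_pos_iff : 0 < labelValue f v ↔ f v = 0 :=
  (eq_labelValue_iff.1 rfl).2

theorem labelValue_of_ne_zero (h : f v ≠ 0) : labelValue f v = -(v + 1) :=
  if_neg h

theorem labelValue_injective (f : Fin n → Fin 3) : Function.Injective (labelValue f) :=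
  fun v w h => Fin.ext (by simpa [natAbs_labelValue] using congrArg Int.natAbs h)

theorem eq_of_labelValue_eq (h : labelValue f v = labelValue g v) (h2 : f v = 2 ↔ g v = 2) :
    f v = g v := by
  have h0 : f v = 0 ↔ g v = 0 := by rw [← labelValue_pos_iff, h, labelValue_pos_iff]
  omega

end LabelValue

section ValleySeq

variable {n : ℕ} (f : Fin n → Fin 3)

def descRun : Finset ℤ := ({v | f v = 2} : Finset (Fin n)).image fun v : Fin n => ((v : ℕ) : ℤ) + 1

def ascRun : Finset ℤ := ({v | f v ≠ 2} : Finset (Fin n)).image (labelValue f)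

theorem card_descRun_add_card_ascRun : #(descRun f) + #(ascRun f) = n := by
  rw [descRun, ascRun, card_image_of_injective _ fun v w h => Fin.ext (by simpa using h),
    card_image_of_injective _ (labelValue_injective f), card_filter_add_card_filter_not,
    card_univ, Fintype.card_fin]

theorem card_ascRun : #(ascRun f) = n - #(descRun f) := by
  have := card_descRun_add_card_ascRun f; omega

theorem card_descRun_le : #(descRun f) ≤ n := by
  have := card_descRun_add_card_ascRun f; omega

noncomputable def valleySeq : ℕ → ℤ
  | 0 => 0
  | q + 1 =>
    if hq : q < #(descRun f) then -(descRun f).orderEmbOfFin rfl ⟨q, hq⟩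
    else if hq' : q - #(descRun f) < #(ascRun f) then
      (ascRun f).orderEmbOfFin rfl ⟨q - #(descRun f), hq'⟩
    else 0

variable {f}

theorem mem_descRun {x : ℤ} : x ∈ descRun f ↔ ∃ v, f v = 2 ∧ (v : ℤ) + 1 = x := by
  simp [descRun]

theorem mem_ascRun {x : ℤ} : x ∈ ascRun f ↔ ∃ v, f v ≠ 2 ∧ labelValue f v = x := by
  simp [ascRun]

theorem valleySeq_succ_of_lt {q : ℕ} (hq : q < #(descRun f)) :
    valleySeq f (q + 1) = -(descRun f).orderEmbOfFin rfl ⟨q, hq⟩ :=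
  dif_pos hq

theorem valleySeq_succ_of_le {q : ℕ} (hk : #(descRun f) ≤ q) (hq : q < n) :
    valleySeq f (q + 1) =
      (ascRun f).orderEmbOfFin rfl ⟨q - #(descRun f), by rw [card_ascRun]; omega⟩ := by
  rw [valleySeq, dif_neg (by omega), dif_pos]

theorem exists_valleySeq_succ_eq {q : ℕ} (hq : q < n) :
    ∃ v, valleySeq f (q + 1) = labelValue f v ∧ (q < #(descRun f) ↔ f v = 2) := by
  by_cases hk : q < #(descRun f)
  · obtain ⟨v, hv, hx⟩ := mem_descRun.1 (orderEmbOfFin_mem (descRun f) rfl ⟨q, hk⟩)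
    refine ⟨v, ?_, iff_of_true hk hv⟩
    rw [valleySeq_succ_of_lt hk, ← hx, labelValue_of_ne_zero (by simp [hv])]
  · have hk' : q - #(descRun f) < #(ascRun f) := by rw [card_ascRun]; omega
    obtain ⟨v, hv, hx⟩ := mem_ascRun.1 (orderEmbOfFin_mem (ascRun f) rfl ⟨_, hk'⟩)
    exact ⟨v, by rw [valleySeq_succ_of_le (by omega) hq, hx], iff_of_false hk hv⟩

theorem exists_valleySeq_succ_eq_labelValue (v : Fin n) :
    ∃ q < n, valleySeq f (q + 1) = labelValue f v := by
  have hk := card_descRun_le f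
  by_cases hv : f v = 2
  · obtain ⟨q, hq⟩ : -labelValue f v ∈ Set.range ((descRun f).orderEmbOfFin rfl) := by
      rw [range_orderEmbOfFin, mem_coe, mem_descRun, labelValue_of_ne_zero (by simp [hv])]
      exact ⟨v, hv, by ring⟩
    refine ⟨q, by omega, ?_⟩
    rw [valleySeq_succ_of_lt q.isLt, hq, neg_neg]
  · obtain ⟨r, hr⟩ : labelValue f v ∈ Set.range ((ascRun f).orderEmbOfFin rfl) := by
      rw [range_orderEmbOfFin, mem_coe, mem_ascRun]
      exact ⟨v, hv, rfl⟩
    have := r.isLt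
    have := card_ascRun f
    refine ⟨#(descRun f) + r, by omega, ?_⟩
    rw [valleySeq_succ_of_le (by omega) (by omega), ← hr]
    congr 2
    omega

theorem valleySeq_card_descRun_le {d : ℤ} (hd : d ∈ descRun f) :
    valleySeq f #(descRun f) ≤ -d := by
  obtain ⟨j, rfl⟩ : d ∈ Set.range ((descRun f).orderEmbOfFin rfl) := by
    rwa [range_orderEmbOfFin]
  obtain ⟨m, hm⟩ : ∃ m, #(descRun f) = m + 1 := ⟨#(descRun f) - 1, by have := j.isLt; omega⟩
  conv_lhs => rw [hm]
  rw [valleySeq_succ_of_lt (by omega), neg_le_neg_iff]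
  exact (orderEmbOfFin _ _).monotone (Fin.mk_le_mk.2 (by have := j.isLt; omega))

theorem valleySeq_card_descRun_lt (hf : f ∈ valleyLabelings n) {x : ℤ} (hx : x ∈ ascRun f) :
    valleySeq f #(descRun f) < x := by
  obtain ⟨v, hv, rfl⟩ := mem_ascRun.1 hx
  by_cases hv0 : f v = 0
  · rw [labelValue, if_pos hv0]
    rcases (descRun f).eq_empty_or_nonempty with h | ⟨d, hd⟩
    · simp [h, valleySeq]
    · obtain ⟨w, -, rfl⟩ := mem_descRun.1 hd
      have := valleySeq_card_descRun_le hd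
      omega
  · obtain ⟨w, hvw, hw⟩ := (mem_filter.1 hf).2 v (by omega)
    have := valleySeq_card_descRun_le (mem_descRun.2 ⟨w, hw, rfl⟩)
    rw [labelValue_of_ne_zero hv0]
    rw [Fin.lt_def] at hvw
    omega

theorem isValley_valleySeq (hf : f ∈ valleyLabelings n) :
    IsValley (valleySeq f) n #(descRun f) := by
  refine ⟨card_descRun_le f, strictAntiOn_of_add_one_lt Set.ordConnected_Iic fun q _ _ hq => ?_,
    strictMonoOn_of_lt_add_one Set.ordConnected_Icc fun q _ hq hq' => ?_⟩
  · rw [Set.mem_Iic] at hq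
    rw [valleySeq_succ_of_lt hq]
    cases q with
    | zero =>
      obtain ⟨v, -, hv⟩ := mem_descRun.1 (orderEmbOfFin_mem (descRun f) rfl ⟨0, hq⟩)
      rw [valleySeq, ← hv]; omega
    | succ q =>
      rw [valleySeq_succ_of_lt (by omega), neg_lt_neg_iff]
      exact (orderEmbOfFin _ _).strictMono (Fin.mk_lt_mk.2 (Nat.lt_succ_self q))
  · obtain ⟨hkq, hqn⟩ : #(descRun f) ≤ q ∧ q < n := ⟨hq.1, hq'.2⟩
    rw [valleySeq_succ_of_le hkq hqn]
    rcases hkq.eq_or_lt with rfl | hlt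
    · exact valleySeq_card_descRun_lt hf (orderEmbOfFin_mem _ _ _)
    · obtain ⟨r, rfl⟩ : ∃ r, q = r + 1 := ⟨q - 1, by omega⟩
      rw [valleySeq_succ_of_le (by omega) (by omega)]
      exact (orderEmbOfFin _ _).strictMono (Fin.mk_lt_mk.2 (by omega))

end ValleySeq

abbrev SignedPerm (n : ℕ) := Equiv.Perm (Fin n) × (Fin n → Bool)

namespace SignedPerm

variable {n : ℕ}

theorem bval_succ (π : SignedPerm n) (p : Fin n) :
    bval n π (p + 1) = if π.2 p then -(((π.1 p : ℕ) : ℤ) + 1) else ((π.1 p : ℕ) : ℤ) + 1 := by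
  simp only [bval, Nat.add_sub_cancel, p.isLt, dite_true, Fin.eta]
  split_ifs <;> ring

theorem natAbs_bval_succ (π : SignedPerm n) (p : Fin n) :
    (bval n π (p + 1)).natAbs = π.1 p + 1 := by
  rw [bval_succ]; split_ifs <;> omega

theorem bval_succ_neg_iff (π : SignedPerm n) (p : Fin n) : bval n π (p + 1) < 0 ↔ π.2 p := by
  rw [bval_succ]; cases π.2 p <;> simp <;> omega

theorem ext_bval {π π' : SignedPerm n} (h : ∀ p : Fin n, bval n π (p + 1) = bval n π' (p + 1)) :
    π = π' := by
  refine Prod.ext (Equiv.ext fun p => Fin.ext ?_) (funext fun p => ?_)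
  · have := congrArg Int.natAbs (h p)
    rw [natAbs_bval_succ, natAbs_bval_succ] at this
    omega
  · rw [Bool.eq_iff_iff, ← bval_succ_neg_iff, ← bval_succ_neg_iff, h p]

noncomputable def ofValues (w : Fin n → ℤ) (hw : ∀ p, ∃ v : Fin n, (w p).natAbs = v + 1)
    (hsurj : ∀ v : Fin n, ∃ p, (w p).natAbs = v + 1) : SignedPerm n :=
  (Equiv.ofBijective (fun p => ⟨(w p).natAbs - 1, by obtain ⟨v, hv⟩ := hw p; omega⟩)
    (Finite.surjective_iff_bijective.1 fun v => by
      obtain ⟨p, hp⟩ := hsurj v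
      exact ⟨p, Fin.ext (by simp only; omega)⟩),
    fun p => decide (w p < 0))

theorem bval_ofValues (w : Fin n → ℤ) (hw) (hsurj) (p : Fin n) :
    bval n (ofValues w hw hsurj) (p + 1) = w p := by
  obtain ⟨v, hv⟩ := hw p
  rw [bval_succ]
  simp only [ofValues, Equiv.ofBijective_apply, decide_eq_true_eq]
  split_ifs <;> omega

theorem bvalHat_zero (π : SignedPerm n) : bvalHat n π 0 = 0 := rfl

theorem bvalHat_succ (π : SignedPerm n) (i : ℕ) : bvalHat n π (i + 1) = bval n π (i + 1) := rfl

theorem bvalHat_ne_bvalHat_succ (π : SignedPerm n) {i : ℕ} (hi : i < n) :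
    bvalHat n π i ≠ bvalHat n π (i + 1) := by
  intro h
  have := congrArg Int.natAbs h
  rw [bvalHat_succ, natAbs_bval_succ π ⟨i, hi⟩] at this
  cases i with
  | zero => simp [bvalHat_zero] at this
  | succ i =>
    rw [bvalHat_succ, natAbs_bval_succ π ⟨i, by omega⟩] at this
    have := π.1.injective (Fin.ext (by omega) : π.1 ⟨i, _⟩ = π.1 ⟨i + 1, hi⟩)
    simp [Fin.ext_iff] at this

theorem bPeakSetHat_eq_empty_iff (π : SignedPerm n) :
    bPeakSetHat n π = ∅ ↔ ∀ i, i + 1 < n →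
      ¬(bvalHat n π i < bvalHat n π (i + 1) ∧ bvalHat n π (i + 2) < bvalHat n π (i + 1)) := by
  simp only [bPeakSetHat, filter_eq_empty_iff, mem_Icc]
  constructor
  · intro h i hi
    simpa using h (x := i + 1) ⟨by omega, by omega⟩
  · intro h i hi
    obtain ⟨j, rfl⟩ : ∃ j, i = j + 1 := ⟨i - 1, by omega⟩
    simpa using h j (by omega)

theorem bPeakSetHat_eq_empty_iff_exists_isValley (π : SignedPerm n) :
    bPeakSetHat n π = ∅ ↔ ∃ k, IsValley (bvalHat n π) n k := by
  rw [bPeakSetHat_eq_empty_iff]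
  exact ⟨exists_isValley fun i => bvalHat_ne_bvalHat_succ π, fun ⟨_, h⟩ _ => h.not_peak⟩

def labeling (π : SignedPerm n) (v : Fin n) : Fin 3 :=
  if 0 < bvalHat n π (π.1.symm v + 1) then 0
  else if bvalHat n π (π.1.symm v + 1) < bvalHat n π (π.1.symm v) then 2 else 1

theorem labeling_eq_zero_iff (π : SignedPerm n) (v : Fin n) :
    labeling π v = 0 ↔ 0 < bvalHat n π (π.1.symm v + 1) := by
  unfold labeling; split_ifs <;> simp_all

theorem bvalHat_symm_succ (π : SignedPerm n) (v : Fin n) :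
    bvalHat n π (π.1.symm v + 1) = labelValue (labeling π) v :=
  eq_labelValue_iff.2 ⟨by rw [bvalHat_succ]; simpa using natAbs_bval_succ π (π.1.symm v),
    (labeling_eq_zero_iff π v).symm⟩

theorem bvalHat_succ_eq_labelValue (π : SignedPerm n) (q : Fin n) :
    bvalHat n π (q + 1) = labelValue (labeling π) (π.1 q) := by
  simpa using bvalHat_symm_succ π (π.1 q)

variable {π : SignedPerm n} {k : ℕ}

theorem labeling_eq_two_iff (hπ : IsValley (bvalHat n π) n k) (v : Fin n) :
    labeling π v = 2 ↔ π.1.symm v < k := by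
  have hdesc := hπ.lt_iff (π.1.symm v).isLt
  unfold labeling
  split_ifs with hpos h
  · exact iff_of_false (by decide) fun hk => (hπ.lt_apply_zero (Nat.succ_pos _) hk).not_gt hpos
  · exact iff_of_true rfl (hdesc.1 h)
  · exact iff_of_false (by decide) (mt hdesc.2 h)

theorem labeling_apply_eq_two_iff (hπ : IsValley (bvalHat n π) n k) (q : Fin n) :
    labeling π (π.1 q) = 2 ↔ (q : ℕ) < k := by
  simpa using labeling_eq_two_iff hπ (π.1 q)

theorem labeling_mem_valleyLabelings (hπ : IsValley (bvalHat n π) n k) :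
    labeling π ∈ valleyLabelings n := by
  simp only [valleyLabelings, mem_filter, mem_univ, true_and]
  intro v hv
  set p := π.1.symm v
  have hval : bvalHat n π (p + 1) = -(v + 1) := by
    rw [bvalHat_symm_succ, labelValue_of_ne_zero (by simp [hv])]
  have hkp : k ≤ p := not_lt.1 fun h => by simpa [hv] using (labeling_eq_two_iff hπ v).2 h
  -- `k ≠ 0`, as otherwise the sequence rises from `π₀ = 0` and has no negative entry
  obtain ⟨j, rfl⟩ : ∃ j, k = j + 1 := by
    refine ⟨k - 1, (Nat.succ_pred_eq_of_pos (Nat.pos_of_ne_zero fun hk => ?_)).symm⟩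
    subst hk
    have hp : (p : ℕ) + 1 ∈ Set.Icc 0 n := ⟨Nat.zero_le _, p.isLt⟩
    have := hπ.2.2 ⟨le_rfl, Nat.zero_le n⟩ hp (Nat.zero_lt_succ _)
    rw [bvalHat_zero] at this
    omega
  have hj : j < n := by have := hπ.1; omega
  have hw : labeling π (π.1 ⟨j, hj⟩) = 2 := (labeling_apply_eq_two_iff hπ _).2 (Nat.lt_succ_self j)
  have hlt := hπ.2.2 ⟨le_rfl, hπ.1⟩ ⟨by omega, p.isLt⟩ (show j + 1 < p + 1 by omega)
  rw [hval, bvalHat_succ_eq_labelValue π ⟨j, hj⟩, labelValue_of_ne_zero (by simp [hw])] at hlt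
  exact ⟨π.1 ⟨j, hj⟩, Fin.lt_def.2 (by omega), hw⟩

theorem descRun_labeling (hπ : IsValley (bvalHat n π) n k) :
    descRun (labeling π) = (Ico 0 k).image fun q => -bvalHat n π (q + 1) := by
  ext x
  rw [mem_descRun, mem_image]
  constructor
  · rintro ⟨v, hv, rfl⟩
    refine ⟨π.1.symm v, mem_Ico.2 ⟨Nat.zero_le _, (labeling_eq_two_iff hπ v).1 hv⟩, ?_⟩
    rw [bvalHat_symm_succ, labelValue_of_ne_zero (by simp [hv]), neg_neg]
  · rintro ⟨q, hq, rfl⟩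
    obtain ⟨-, hqk⟩ := mem_Ico.1 hq
    have hqn : q < n := by have := hπ.1; omega
    have hv := (labeling_apply_eq_two_iff hπ ⟨q, hqn⟩).2 hqk
    refine ⟨π.1 ⟨q, hqn⟩, hv, ?_⟩
    rw [bvalHat_succ_eq_labelValue π ⟨q, hqn⟩, labelValue_of_ne_zero (by simp [hv])]
    ring

theorem ascRun_labeling (hπ : IsValley (bvalHat n π) n k) :
    ascRun (labeling π) = (Ico k n).image fun q => bvalHat n π (q + 1) := by
  ext x
  rw [mem_ascRun, mem_image]
  constructor
  · rintro ⟨v, hv, rfl⟩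
    exact ⟨π.1.symm v, mem_Ico.2 ⟨not_lt.1 (mt (labeling_eq_two_iff hπ v).2 hv),
      (π.1.symm v).isLt⟩, bvalHat_symm_succ π v⟩
  · rintro ⟨q, hq, rfl⟩
    obtain ⟨hkq, hqn⟩ := mem_Ico.1 hq
    exact ⟨π.1 ⟨q, hqn⟩, mt (labeling_apply_eq_two_iff hπ ⟨q, hqn⟩).1 (by simpa using hkq),
      (bvalHat_succ_eq_labelValue π ⟨q, hqn⟩).symm⟩

theorem card_descRun_labeling (hπ : IsValley (bvalHat n π) n k) :
    #(descRun (labeling π)) = k := by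
  rw [descRun_labeling hπ,
    card_image_of_injOn (by rw [coe_Ico]; exact hπ.strictAntiOn_succ.neg.injOn), Nat.card_Ico,
    Nat.sub_zero]

noncomputable def valleyPerm (f : Fin n → Fin 3) : SignedPerm n :=
  ofValues (fun p => valleySeq f (p + 1))
    (fun p => by
      obtain ⟨v, hv, -⟩ := exists_valleySeq_succ_eq (f := f) p.isLt
      exact ⟨v, by rw [hv, natAbs_labelValue]⟩)
    (fun v => by
      obtain ⟨q, hq, hv⟩ := exists_valleySeq_succ_eq_labelValue (f := f) v
      exact ⟨⟨q, hq⟩, by rw [hv, natAbs_labelValue]⟩)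

theorem valleyPerm_labeling (hπ : IsValley (bvalHat n π) n k) : valleyPerm (labeling π) = π := by
  refine ext_bval fun p => ?_
  rw [valleyPerm, bval_ofValues, ← bvalHat_succ]
  have hk := card_descRun_labeling hπ
  by_cases hp : (p : ℕ) < k
  · rw [valleySeq_succ_of_lt (by omega),
      orderEmbOfFin_eq_of_eq_image hπ.strictAntiOn_succ.neg (descRun_labeling hπ)]
    simp
  · rw [valleySeq_succ_of_le (by omega) p.isLt,
      orderEmbOfFin_eq_of_eq_image hπ.strictMonoOn_succ (ascRun_labeling hπ)]
    congr 1
    simp only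
    omega

variable {f : Fin n → Fin 3}

theorem bvalHat_valleyPerm {i : ℕ} (hi : i ≤ n) : bvalHat n (valleyPerm f) i = valleySeq f i := by
  cases i with
  | zero => rfl
  | succ q => exact bval_ofValues _ _ _ ⟨q, hi⟩

theorem isValley_valleyPerm (hf : f ∈ valleyLabelings n) :
    IsValley (bvalHat n (valleyPerm f)) n #(descRun f) :=
  (isValley_valleySeq hf).congr fun _ hi => (bvalHat_valleyPerm hi).symm

theorem labeling_valleyPerm (hf : f ∈ valleyLabelings n) : labeling (valleyPerm f) = f := by
  funext v
  obtain ⟨w, hw, hiff⟩ := exists_valleySeq_succ_eq (f := f) ((valleyPerm f).1.symm v).isLt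
  have hv : labelValue (labeling (valleyPerm f)) v = labelValue f w := by
    rw [← bvalHat_symm_succ, bvalHat_valleyPerm (Fin.isLt _), hw]
  obtain rfl : v = w := Fin.ext (by simpa [natAbs_labelValue] using congrArg Int.natAbs hv)
  exact eq_of_labelValue_eq hv ((labeling_eq_two_iff (isValley_valleyPerm hf) v).trans hiff)

theorem PBhat_empty_eq_card_valleyLabelings (n : ℕ) : PBhat n ∅ = #(valleyLabelings n) := by
  have hvalley (π : SignedPerm n) (hπ : π ∈ ({π | bPeakSetHat n π = ∅} : Finset _)) :
      ∃ k, IsValley (bvalHat n π) n k :=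
    (bPeakSetHat_eq_empty_iff_exists_isValley π).1 (mem_filter.1 hπ).2
  refine card_bij' (fun π _ => labeling π) (fun f _ => valleyPerm f)
    (fun π hπ => (hvalley π hπ).elim fun _ hk => labeling_mem_valleyLabelings hk)
    (fun f hf => mem_filter.2 ⟨mem_univ _,
      (bPeakSetHat_eq_empty_iff_exists_isValley _).2 ⟨_, isValley_valleyPerm hf⟩⟩)
    (fun π hπ => (hvalley π hπ).elim fun _ hk => valleyPerm_labeling hk)
    (fun f hf => labeling_valleyPerm hf)

end SignedPerm

/-- with `π_0 = 0`, the number of signed permutations with no peaks is `(3^n+1)/2`. -/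
theorem stmt8 (n : ℕ) : 2 * PBhat n ∅ = 3 ^ n + 1 := by
  rw [SignedPerm.PBhat_empty_eq_card_valleyLabelings, two_mul_card_valleyLabelings]
end

section
/- For admissible S ⊆ {2,...,n-1}, #P_B(S,n) = #\widehat{P}_B(S,n) + #\widehat{P}_B(S ∪ {1}, n). -/
open Finset

theorem Finset.erase_eq_iff_eq_or_eq_insert {β : Type*} [DecidableEq β] {s t : Finset β} {a : β}
    (ht : a ∉ t) : s.erase a = t ↔ s = t ∨ s = insert a t := by
  by_cases hs : a ∈ s
  · rw [erase_eq_iff_eq_insert hs ht, or_iff_right (ne_of_mem_of_not_mem' hs ht)]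
  · rw [erase_eq_of_notMem hs, or_iff_left fun h : s = insert a t => hs (h ▸ mem_insert_self a t)]

theorem Finset.card_filter_erase_eq {α β : Type*} [DecidableEq α] [DecidableEq β] (s : Finset α)
    (f : α → Finset β) {a : β} {t : Finset β} (ht : a ∉ t) :
    #{x ∈ s | (f x).erase a = t} = #{x ∈ s | f x = t} + #{x ∈ s | f x = insert a t} := by
  simp_rw [erase_eq_iff_eq_or_eq_insert ht]
  rw [filter_or, card_union_of_disjoint]
  exact disjoint_filter.2 fun x _ h h' => ht (h ▸ h' ▸ mem_insert_self a t)

theorem bvalHat_of_ne_zero (n : ℕ) (π : Equiv.Perm (Fin n) × (Fin n → Bool)) {i : ℕ}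
    (hi : i ≠ 0) : bvalHat n π i = bval n π i :=
  if_neg hi

/-- A position `i ≥ 2` sees the same three values whether or not `π_0 = 0` is prepended. -/
theorem bPeakSet_eq_erase_one (n : ℕ) (π : Equiv.Perm (Fin n) × (Fin n → Bool)) :
    bPeakSet n π = (bPeakSetHat n π).erase 1 := by
  ext i
  simp only [bPeakSet, bPeakSetHat, mem_erase, mem_filter, mem_Icc]
  by_cases hi : 2 ≤ i
  · simp only [bvalHat_of_ne_zero n π (show i - 1 ≠ 0 by omega),
      bvalHat_of_ne_zero n π (show i ≠ 0 by omega), bvalHat_of_ne_zero n π (show i + 1 ≠ 0 by omega)]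
    omega
  · omega

theorem stmt11_general (n : ℕ) (S : Finset ℕ)
    (hS : S ⊆ Finset.Icc 2 (n - 1)) :
    PB n S = PBhat n S + PBhat n (insert 1 S) := by
  have h1 : 1 ∉ S := fun h => by simpa using hS h
  simp only [PB, PBhat, bPeakSet_eq_erase_one]
  exact card_filter_erase_eq univ (bPeakSetHat n) h1

/-- `#P_B(S,n) = #P̂_B(S,n) + #P̂_B(S ∪ {1}, n)`. -/
theorem stmt11 (n : ℕ) (S : Finset ℕ)
    (hS : S ⊆ Finset.Icc 2 (n - 1)) (hcons : ∀ i ∈ S, i + 1 ∉ S) :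
    PB n S = PBhat n S + PBhat n (insert 1 S) :=
  stmt11_general n S hS
end

section
/- With the convention π_0 = 0, the number of permutations of {1,...,n} with peak set exactly {1} equals 2^{n-1} - 1. -/
open Finset

/-!
With `π₀ = 0`, position 1 is a peak exactly when `π₁ > π₂`, so the permutations counted are
those with `π₁ > π₂` and no peak at positions `2, …, n-1`. A sequence without interior peaks
decreases down to its minimum and increases after it; conversely such a V-shaped sequence has no
interior peak. A V-shaped permutation is determined by the set of values standing before `1`,
which can be any subset of `{2, …, n}`, and `π₁ > π₂` says that this set is nonempty.
-/

section Peaks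

variable {α : Type*} [LinearOrder α] {f : ℕ → α} {a b : ℕ}

def IsPeak (f : ℕ → α) (i : ℕ) : Prop :=
  f (i - 1) < f i ∧ f (i + 1) < f i

theorem not_isPeak_of_strictAntiOn_of_strictMonoOn {z : ℕ}
    (hanti : StrictAntiOn f (Set.Icc a z)) (hmono : StrictMonoOn f (Set.Icc z b))
    {i : ℕ} (hi : i ∈ Set.Ioo a b) : ¬ IsPeak f i := by
  rintro ⟨hleft, hright⟩
  obtain ⟨hai, hib⟩ := hi
  rcases le_or_gt i z with hiz | hzi
  · exact (hanti ⟨by omega, by omega⟩ ⟨by omega, hiz⟩ (by omega : i - 1 < i)).asymm hleft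
  · exact (hmono ⟨hzi.le, hib.le⟩ ⟨by omega, hib⟩ (Nat.lt_succ_self i)).asymm hright

theorem strictMonoOn_Icc_of_lt_of_forall_not_isPeak (hinj : Set.InjOn f (Set.Icc a b))
    (hpeak : ∀ i ∈ Set.Ioo a b, ¬ IsPeak f i) {i : ℕ} (hai : a < i)
    (hasc : f (i - 1) < f i) : StrictMonoOn f (Set.Icc (i - 1) b) := by
  have ascent : ∀ j, i ≤ j → j ≤ b → f (j - 1) < f j := by
    intro j hij hjb
    induction j, hij using Nat.le_induction with
    | base => exact hasc
    | succ j hij ih =>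
      have hprev := ih (by omega)
      have hne : f j ≠ f (j + 1) := hinj.ne ⟨by omega, by omega⟩ ⟨by omega, hjb⟩ (by omega)
      have := hpeak j ⟨by omega, by omega⟩
      simp only [IsPeak, not_and, not_lt] at this
      exact (this hprev).lt_of_ne hne
  refine strictMonoOn_of_lt_add_one Set.ordConnected_Icc fun j _ ⟨hij, _⟩ ⟨_, hjb⟩ => ?_
  simpa using ascent (j + 1) (by omega) hjb

theorem strictAntiOn_strictMonoOn_of_forall_not_isPeak (hinj : Set.InjOn f (Set.Icc a b))
    (hpeak : ∀ i ∈ Set.Ioo a b, ¬ IsPeak f i) {z : ℕ} (hz : z ∈ Set.Icc a b)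
    (hmin : ∀ i ∈ Set.Icc a b, f z ≤ f i) :
    StrictAntiOn f (Set.Icc a z) ∧ StrictMonoOn f (Set.Icc z b) := by
  obtain ⟨haz, hzb⟩ := hz
  constructor
  · refine strictAntiOn_of_add_one_lt Set.ordConnected_Icc fun j _ ⟨haj, _⟩ ⟨_, hjz⟩ => ?_
    by_contra! hle
    have hasc : f j < f (j + 1) :=
      hle.lt_of_ne (hinj.ne ⟨haj, by omega⟩ ⟨by omega, by omega⟩ (by omega))
    have hmono := strictMonoOn_Icc_of_lt_of_forall_not_isPeak hinj hpeak
      (i := j + 1) (by omega) (by simpa using hasc)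
    exact (hmono ⟨by omega, by omega⟩ ⟨by omega, hzb⟩ (by omega : z - 1 < z)).not_ge
      (hmin (z - 1) ⟨by omega, by omega⟩)
  · rcases hzb.eq_or_lt with rfl | hzb
    · simp
    · have hasc : f z < f (z + 1) :=
        (hmin (z + 1) ⟨by omega, hzb⟩).lt_of_ne (hinj.ne ⟨haz, hzb.le⟩ ⟨by omega, hzb⟩ (by omega))
      simpa using strictMonoOn_Icc_of_lt_of_forall_not_isPeak hinj hpeak
        (i := z + 1) (by omega) (by simpa using hasc)

end Peaks

section Word

variable {n : ℕ} (π : Equiv.Perm (Fin n))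

theorem sval_val_add_one (a : Fin n) : sval n π (a + 1) = (π a : ℕ) + 1 := by
  simp [sval]

theorem exists_fin_val_add_one_eq {i : ℕ} (hi : 1 ≤ i) (hin : i ≤ n) :
    ∃ a : Fin n, (a : ℕ) + 1 = i :=
  ⟨⟨i - 1, by omega⟩, by simp; omega⟩

theorem sval_injOn : Set.InjOn (sval n π) (Set.Icc 1 n) := by
  intro i ⟨hi1, hin⟩ j ⟨hj1, hjn⟩ hij
  obtain ⟨a, rfl⟩ := exists_fin_val_add_one_eq hi1 hin
  obtain ⟨b, rfl⟩ := exists_fin_val_add_one_eq hj1 hjn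
  simp only [sval_val_add_one, add_left_inj, Nat.cast_inj, Fin.val_inj] at hij
  rw [π.injective hij]

theorem strictAntiOn_sval_iff (k : Fin n) :
    StrictAntiOn (sval n π) (Set.Icc 1 (k + 1)) ↔ StrictAntiOn π (Set.Iic k) := by
  constructor
  · intro h a (ha : a ≤ k) b (hb : b ≤ k) hab
    have := @h (a + 1) ⟨by omega, by simpa⟩ (b + 1) ⟨by omega, by simpa⟩ (by simpa)
    simpa [sval_val_add_one] using this
  · intro h i ⟨hi1, hik⟩ j ⟨hj1, hjk⟩ hij
    obtain ⟨a, rfl⟩ := exists_fin_val_add_one_eq (n := n) hi1 (by omega)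
    obtain ⟨b, rfl⟩ := exists_fin_val_add_one_eq (n := n) hj1 (by omega)
    have := @h a (show a ≤ k by omega) b (show b ≤ k by omega) (by omega)
    simpa [sval_val_add_one] using this

theorem strictMonoOn_sval_iff (k : Fin n) :
    StrictMonoOn (sval n π) (Set.Icc (k + 1) n) ↔ StrictMonoOn π (Set.Ici k) := by
  constructor
  · intro h a (ha : k ≤ a) b (hb : k ≤ b) hab
    have := @h (a + 1) ⟨by simpa, by omega⟩ (b + 1) ⟨by simpa, by omega⟩ (by simpa)
    simpa [sval_val_add_one] using this
  · intro h i ⟨hki, hin⟩ j ⟨hkj, hjn⟩ hij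
    obtain ⟨a, rfl⟩ := exists_fin_val_add_one_eq (n := n) (by omega) hin
    obtain ⟨b, rfl⟩ := exists_fin_val_add_one_eq (n := n) (by omega) hjn
    have := @h a (show k ≤ a by omega) b (show k ≤ b by omega) (by omega)
    simpa [sval_val_add_one] using this

theorem svalHat_of_ne_zero {i : ℕ} (hi : i ≠ 0) : svalHat n π i = sval n π i := by
  simp [svalHat, hi]

theorem isPeak_svalHat_iff {i : ℕ} (hi : 2 ≤ i) :
    IsPeak (svalHat n π) i ↔ IsPeak (sval n π) i := by
  simp only [IsPeak, svalHat_of_ne_zero π (show i - 1 ≠ 0 by omega),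
    svalHat_of_ne_zero π (show i ≠ 0 by omega), svalHat_of_ne_zero π (show i + 1 ≠ 0 by omega)]

theorem isPeak_svalHat_one_iff (hn : 0 < n) :
    IsPeak (svalHat n π) 1 ↔ sval n π 2 < sval n π 1 := by
  have hpos : 0 < sval n π 1 := by simp [sval, hn]
  simp [IsPeak, svalHat, hpos]

theorem sPeakSetHat_eq_singleton_one_iff_sval :
    sPeakSetHat n π = {1} ↔
      1 < n ∧ sval n π 2 < sval n π 1 ∧ ∀ i ∈ Set.Ioo 1 n, ¬ IsPeak (sval n π) i := by
  have mem_iff (i : ℕ) :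
      i ∈ sPeakSetHat n π ↔ (1 ≤ i ∧ i ≤ n - 1) ∧ IsPeak (svalHat n π) i := by
    simp [sPeakSetHat, IsPeak]
  rw [eq_singleton_iff_unique_mem, mem_iff]
  constructor
  · rintro ⟨⟨⟨-, h1n⟩, hpeak1⟩, honly⟩
    rw [isPeak_svalHat_one_iff π (by omega)] at hpeak1
    refine ⟨by omega, hpeak1, fun i ⟨h1i, hin⟩ hpeak => ?_⟩
    have := honly i ((mem_iff i).2 ⟨⟨by omega, by omega⟩, (isPeak_svalHat_iff π h1i).2 hpeak⟩)
    omega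
  · rintro ⟨hn, hdesc, hpeak⟩
    refine ⟨⟨⟨le_rfl, by omega⟩, (isPeak_svalHat_one_iff π (by omega)).2 hdesc⟩, fun i hi => ?_⟩
    obtain ⟨⟨h1i, hin⟩, hpeak_i⟩ := (mem_iff i).1 hi
    by_contra hne
    exact hpeak i ⟨by omega, by omega⟩ ((isPeak_svalHat_iff π (by omega)).1 hpeak_i)

/- The word `sval n π` is `π` shifted up by one, so its minimum `1` is `0 : Fin n` and sits at
position `π.symm 0 + 1`. -/
theorem sPeakSetHat_eq_singleton_one_iff [NeZero n] :
    sPeakSetHat n π = {1} ↔ 0 < π.symm 0 ∧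
      StrictAntiOn π (Set.Iic (π.symm 0)) ∧ StrictMonoOn π (Set.Ici (π.symm 0)) := by
  set z := π.symm 0 with hz
  rw [sPeakSetHat_eq_singleton_one_iff_sval, ← strictAntiOn_sval_iff, ← strictMonoOn_sval_iff]
  have hmin : ∀ i ∈ Set.Icc 1 n, sval n π (z + 1) ≤ sval n π i := by
    intro i ⟨hi1, hin⟩
    obtain ⟨a, rfl⟩ := exists_fin_val_add_one_eq hi1 hin
    simp [sval_val_add_one, hz]
  constructor
  · rintro ⟨hn, hdesc, hpeak⟩
    refine ⟨?_, strictAntiOn_strictMonoOn_of_forall_not_isPeak (sval_injOn π) hpeak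
      ⟨by omega, z.isLt⟩ hmin⟩
    rw [Fin.pos_iff_ne_zero]
    rintro hz0
    exact hdesc.not_ge (by simpa [hz0] using hmin 2 ⟨by omega, hn⟩)
  · rintro ⟨hz0, hanti, hmono⟩
    have hz1 : 1 ≤ (z : ℕ) := hz0
    refine ⟨by omega, hanti ⟨le_rfl, by omega⟩ ⟨by omega, by omega⟩ one_lt_two,
      fun i hi => not_isPeak_of_strictAntiOn_of_strictMonoOn hanti hmono hi⟩

end Word

section Uniqueness

variable {α β : Type*} [LinearOrder α] [LinearOrder β] {f g : α → β} {s : Set α}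

theorem StrictMonoOn.eqOn_of_image_eq [WellFoundedLT α] (hf : StrictMonoOn f s)
    (hg : StrictMonoOn g s) (h : f '' s = g '' s) : s.EqOn f g := by
  rw [Set.strictMonoOn_iff_strictMono] at hf hg
  rw [Set.image_eq_range, Set.image_eq_range, hf.range_inj hg] at h
  exact fun x hx => congrFun h ⟨x, hx⟩

theorem StrictAntiOn.eqOn_of_image_eq [WellFoundedGT α] (hf : StrictAntiOn f s)
    (hg : StrictAntiOn g s) (h : f '' s = g '' s) : s.EqOn f g := by
  rw [Set.strictAntiOn_iff_strictAnti] at hf hg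
  rw [Set.image_eq_range, Set.image_eq_range, hf.range_inj hg] at h
  exact fun x hx => congrFun h ⟨x, hx⟩

theorem Equiv.eq_of_strictAntiOn_Iio_of_strictMonoOn_Ici [WellFoundedLT α] [WellFoundedGT α]
    {π σ : α ≃ β} {k : α} (hπ : StrictAntiOn π (Set.Iio k)) (hπ' : StrictMonoOn π (Set.Ici k))
    (hσ : StrictAntiOn σ (Set.Iio k)) (hσ' : StrictMonoOn σ (Set.Ici k))
    (h : π '' Set.Iio k = σ '' Set.Iio k) : π = σ := by
  have h' : π '' Set.Ici k = σ '' Set.Ici k := by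
    rw [← Set.compl_Iio, π.image_compl, σ.image_compl, h]
  ext j
  rcases lt_or_ge j k with hj | hj
  · rw [hπ.eqOn_of_image_eq hσ h hj]
  · rw [hπ'.eqOn_of_image_eq hσ' h' hj]

end Uniqueness

section VShapedPerm

variable {n : ℕ}

/-- Lists `S` in decreasing order, then `Sᶜ` in increasing order. -/
def vShapedPerm (S : Finset (Fin n)) : Equiv.Perm (Fin n) :=
  (finCongr (by simp [card_add_card_compl] : n = #S + #Sᶜ)).trans <|
    finSumFinEquiv.symm.trans <|
      (Equiv.sumCongr (Fin.revPerm.trans (S.orderIsoOfFin rfl).toEquiv)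
        ((Sᶜ.orderIsoOfFin rfl).toEquiv.trans (Equiv.subtypeEquivRight fun _ => mem_compl))).trans
      (Equiv.sumCompl (· ∈ S))

theorem vShapedPerm_apply_of_lt (S : Finset (Fin n)) {j : Fin n} (hj : (j : ℕ) < #S) :
    vShapedPerm S j = S.orderEmbOfFin rfl (Fin.rev ⟨j, hj⟩) := by
  have : finCongr (by simp [card_add_card_compl] : n = #S + #Sᶜ) j = Fin.castAdd _ ⟨j, hj⟩ := rfl
  simp only [vShapedPerm, Equiv.trans_apply]
  rw [this, finSumFinEquiv_symm_apply_castAdd]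
  simp

theorem vShapedPerm_apply_of_le (S : Finset (Fin n)) {j : Fin n} (hj : #S ≤ (j : ℕ)) :
    vShapedPerm S j = Sᶜ.orderEmbOfFin rfl ⟨j - #S, by simp [card_compl]; omega⟩ := by
  have : finCongr (by simp [card_add_card_compl] : n = #S + #Sᶜ) j =
      Fin.natAdd _ ⟨j - #S, by simp [card_compl]; omega⟩ := by ext; simp; omega
  simp only [vShapedPerm, Equiv.trans_apply]
  rw [this, finSumFinEquiv_symm_apply_natAdd]
  simp

theorem vShapedPerm_mem_iff (S : Finset (Fin n)) (j : Fin n) :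
    vShapedPerm S j ∈ S ↔ (j : ℕ) < #S := by
  rcases lt_or_ge (j : ℕ) #S with hj | hj
  · simp [hj, vShapedPerm_apply_of_lt S hj]
  · have := orderEmbOfFin_mem Sᶜ rfl ⟨j - #S, by simp [card_compl]; omega⟩
    rw [vShapedPerm_apply_of_le S hj]
    exact iff_of_false (mem_compl.1 this) hj.not_gt

variable {S : Finset (Fin n)} {k : Fin n}

theorem vShapedPerm_apply_eq_zero [NeZero n] (h0 : 0 ∉ S) (hk : (k : ℕ) = #S) :
    vShapedPerm S k = 0 := by
  have hpos : 0 < #Sᶜ := card_pos.2 ⟨0, mem_compl.2 h0⟩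
  rw [vShapedPerm_apply_of_le S hk.ge, ← nonpos_iff_eq_zero]
  calc Sᶜ.orderEmbOfFin rfl ⟨k - #S, _⟩ = Sᶜ.orderEmbOfFin rfl ⟨0, hpos⟩ := by simp [hk]
    _ = Sᶜ.min' _ := orderEmbOfFin_zero rfl hpos
    _ ≤ 0 := min'_le _ _ (mem_compl.2 h0)

theorem strictAntiOn_vShapedPerm [NeZero n] (h0 : 0 ∉ S) (hk : (k : ℕ) = #S) :
    StrictAntiOn (vShapedPerm S) (Set.Iic k) := by
  intro a (ha : a ≤ k) b (hb : b ≤ k) hab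
  rcases hb.lt_or_eq with hb | rfl
  · rw [Fin.lt_def] at hab hb
    rw [vShapedPerm_apply_of_lt S (by omega), vShapedPerm_apply_of_lt S (by omega)]
    exact (S.orderEmbOfFin rfl).strictMono (by simp [Fin.lt_def]; omega)
  · rw [vShapedPerm_apply_eq_zero h0 hk, Fin.pos_iff_ne_zero, ← vShapedPerm_apply_eq_zero h0 hk]
    exact (vShapedPerm S).injective.ne hab.ne

theorem strictMonoOn_vShapedPerm (hk : (k : ℕ) = #S) :
    StrictMonoOn (vShapedPerm S) (Set.Ici k) := by
  intro a (ha : k ≤ a) b (hb : k ≤ b) hab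
  rw [Fin.le_def] at ha hb
  rw [Fin.lt_def] at hab
  rw [vShapedPerm_apply_of_le S (by omega), vShapedPerm_apply_of_le S (by omega)]
  exact (Sᶜ.orderEmbOfFin rfl).strictMono (by simp [Fin.lt_def]; omega)

theorem map_Iio_vShapedPerm (hk : (k : ℕ) = #S) :
    (Iio k).map (vShapedPerm S).toEmbedding = S := by
  ext v
  rw [mem_map_equiv, mem_Iio, Fin.lt_def, hk, ← vShapedPerm_mem_iff, Equiv.apply_symm_apply]

theorem vShapedPerm_symm_zero [NeZero n] (h0 : 0 ∉ S) : ((vShapedPerm S).symm 0 : ℕ) = #S := by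
  have hSn : #S < n := by simpa using card_lt_univ_of_notMem h0
  have : (vShapedPerm S).symm 0 = ⟨#S, hSn⟩ := by
    rw [Equiv.symm_apply_eq, vShapedPerm_apply_eq_zero h0 rfl]
  rw [this]

theorem sPeakSetHat_vShapedPerm [NeZero n] (h0 : 0 ∉ S) (hS : S.Nonempty) :
    sPeakSetHat n (vShapedPerm S) = {1} := by
  have hk := vShapedPerm_symm_zero h0
  refine (sPeakSetHat_eq_singleton_one_iff _).2
    ⟨?_, strictAntiOn_vShapedPerm h0 hk, strictMonoOn_vShapedPerm hk⟩
  simpa [Fin.lt_def, hk] using hS.card_pos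

end VShapedPerm

theorem PPhat_singleton_one_eq_card {n : ℕ} [NeZero n] :
    PPhat n {1} = #((univ.erase (0 : Fin n)).powerset.erase ∅) := by
  refine card_bij (fun π _ => (Iio (π.symm 0)).map π.toEmbedding) ?_ ?_ ?_
  · intro π hπ
    obtain ⟨hz, -, -⟩ := (sPeakSetHat_eq_singleton_one_iff π).1 (mem_filter.1 hπ).2
    refine mem_erase.2 ⟨(map_nonempty.2 ⟨0, mem_Iio.2 hz⟩).ne_empty, mem_powerset.2 ?_⟩
    intro v hv
    rw [mem_map_equiv, mem_Iio] at hv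
    exact mem_erase.2 ⟨by rintro rfl; exact hv.false, mem_univ v⟩
  · intro π hπ σ hσ h
    obtain ⟨-, hπ, hπ'⟩ := (sPeakSetHat_eq_singleton_one_iff π).1 (mem_filter.1 hπ).2
    obtain ⟨-, hσ, hσ'⟩ := (sPeakSetHat_eq_singleton_one_iff σ).1 (mem_filter.1 hσ).2
    have hk : π.symm 0 = σ.symm 0 := Fin.ext (by simpa using congrArg card h)
    rw [hk] at h hπ hπ'
    refine Equiv.eq_of_strictAntiOn_Iio_of_strictMonoOn_Ici (hπ.mono Set.Iio_subset_Iic_self) hπ'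
      (hσ.mono Set.Iio_subset_Iic_self) hσ' ?_
    simpa using congrArg ((↑) : Finset (Fin n) → Set (Fin n)) h
  · intro S hS
    obtain ⟨hS, hS0⟩ := mem_erase.1 hS
    have h0 : (0 : Fin n) ∉ S := fun h => (mem_erase.1 (mem_powerset.1 hS0 h)).1 rfl
    exact ⟨vShapedPerm S,
      mem_filter.2 ⟨mem_univ _, sPeakSetHat_vShapedPerm h0 (nonempty_iff_ne_empty.2 hS)⟩,
      map_Iio_vShapedPerm (vShapedPerm_symm_zero h0)⟩

theorem stmt15_general (n : ℕ) : PPhat n {1} = 2 ^ (n - 1) - 1 := by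
  rcases n with _ | n
  · rfl
  · rw [PPhat_singleton_one_eq_card, card_erase_of_mem (empty_mem_powerset _), card_powerset,
      card_erase_of_mem (mem_univ _), card_univ, Fintype.card_fin]

/-- with `π_0 = 0`, `#P̂({1},n) = 2^(n-1) - 1`. -/
theorem stmt15 (n : ℕ) (hn : 1 ≤ n) : PPhat n {1} = 2 ^ (n - 1) - 1 :=
  stmt15_general n
end

section
/- With the convention π_0 = 0, for 1 ≤ m ≤ n-1 the number of permutations of {1,...,n} with peak set exactly {m} satisfies #\widehat{P}({m},n) = 2^{n-m}·C(n,m-1) - #\widehat{P}({m-1},n) - 1 (where #\widehat{P}({0},n) is interpreted as 0 for m=1 via #\widehat{P}(∅,n)=1 figuring in the recursion). -/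
open Finset

namespace Stmt16Aux

/-- natural-number version of `svalHat`. -/
def uval (n : ℕ) (π : Equiv.Perm (Fin n)) (i : ℕ) : ℕ := (svalHat n π i).toNat

lemma uval_cast (n : ℕ) (π : Equiv.Perm (Fin n)) (i : ℕ) :
    (uval n π i : ℤ) = svalHat n π i := by
  unfold uval svalHat sval
  split_ifs with h1 h2 <;> simp <;> positivity

lemma svalHat_lt_iff (n : ℕ) (π : Equiv.Perm (Fin n)) (i j : ℕ) :
    svalHat n π i < svalHat n π j ↔ uval n π i < uval n π j := by
  rw [← uval_cast, ← uval_cast, Nat.cast_lt]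

lemma uval_zero (n : ℕ) (π : Equiv.Perm (Fin n)) : uval n π 0 = 0 := by
  simp [uval, svalHat]

lemma uval_eq (n : ℕ) (π : Equiv.Perm (Fin n)) (i : ℕ) (h1 : 1 ≤ i) (h2 : i ≤ n) :
    uval n π i = (π ⟨i - 1, by omega⟩ : ℕ) + 1 := by
  unfold uval svalHat sval
  rw [if_neg (by omega), dif_pos (by omega)]
  simp

lemma uval_mem (n : ℕ) (π : Equiv.Perm (Fin n)) (i : ℕ) (h1 : 1 ≤ i) (h2 : i ≤ n) :
    uval n π i ∈ Finset.Icc 1 n := by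
  rw [uval_eq n π i h1 h2, Finset.mem_Icc]
  have := (π ⟨i - 1, by omega⟩).isLt
  omega

lemma uval_inj (n : ℕ) (π : Equiv.Perm (Fin n)) {i j : ℕ} (hi : i ≤ n) (hj : j ≤ n)
    (h : uval n π i = uval n π j) : i = j := by
  rcases Nat.eq_zero_or_pos i with hi0 | hi0
  · rcases Nat.eq_zero_or_pos j with hj0 | hj0
    · omega
    · rw [hi0, uval_zero, eq_comm, uval_eq n π j hj0 hj] at h; omega
  rcases Nat.eq_zero_or_pos j with hj0 | hj0
  · rw [hj0, uval_zero, uval_eq n π i hi0 hi] at h; omega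
  rw [uval_eq n π i hi0 hi, uval_eq n π j hj0 hj] at h
  have h' : π ⟨i - 1, by omega⟩ = π ⟨j - 1, by omega⟩ := by
    apply Fin.ext; omega
  have := π.injective h'
  have := Fin.mk.injEq (i-1) (by omega : i - 1 < n) (j-1) (by omega) ▸ this
  omega

lemma uval_injOn (n : ℕ) (π : Equiv.Perm (Fin n)) :
    Set.InjOn (uval n π) (Finset.Icc 1 n : Finset ℕ) := by
  intro i hi j hj h
  simp only [Finset.coe_Icc, Set.mem_Icc] at hi hj
  exact uval_inj n π hi.2 hj.2 h

lemma uval_image (n : ℕ) (π : Equiv.Perm (Fin n)) :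
    (Finset.Icc 1 n).image (uval n π) = Finset.Icc 1 n := by
  apply Finset.eq_of_subset_of_card_le
  · intro x hx
    simp only [Finset.mem_image] at hx
    obtain ⟨i, hi, rfl⟩ := hx
    rw [Finset.mem_Icc] at hi
    exact uval_mem n π i hi.1 hi.2
  · rw [Finset.card_image_of_injOn (uval_injOn n π)]

lemma mem_peakHat (n : ℕ) (π : Equiv.Perm (Fin n)) (i : ℕ) :
    i ∈ sPeakSetHat n π ↔
      i ∈ Finset.Icc 1 (n - 1) ∧ uval n π (i - 1) < uval n π i ∧
        uval n π (i + 1) < uval n π i := by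
  unfold sPeakSetHat
  rw [Finset.mem_filter, svalHat_lt_iff, svalHat_lt_iff]

lemma perm_ext_of_uval (n : ℕ) (π π' : Equiv.Perm (Fin n))
    (h : ∀ i ∈ Finset.Icc 1 n, uval n π i = uval n π' i) : π = π' := by
  apply Equiv.ext
  intro x
  have hx := x.isLt
  have h1 := h (x.val + 1) (by simp [Finset.mem_Icc])
  rw [uval_eq n π _ (by omega) (by omega), uval_eq n π' _ (by omega) (by omega)] at h1
  have : (⟨x.val + 1 - 1, by omega⟩ : Fin n) = x := by apply Fin.ext; simp
  rw [this] at h1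
  apply Fin.ext; omega

end Stmt16Aux
namespace Stmt16Aux

lemma chain_lt {f : ℕ → ℕ} {a b : ℕ} (h : ∀ i, a ≤ i → i < b → f i < f (i + 1)) :
    ∀ i j, a ≤ i → i < j → j ≤ b → f i < f j := by
  intro i j hai hij hjb
  induction j with
  | zero => omega
  | succ k ih =>
    rcases Nat.lt_or_ge i k with hik | hik
    · exact lt_trans (ih hik (by omega)) (h k (by omega) (by omega))
    · have : i = k := by omega
      subst this
      exact h i hai (by omega)

/-- the structural predicate: increasing prefix, and the tail never rises then falls. -/
def Q (n m : ℕ) (π : Equiv.Perm (Fin n)) : Prop :=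
  (∀ i, 1 ≤ i → i ≤ m - 2 → uval n π i < uval n π (i + 1)) ∧
  (∀ i, m + 1 ≤ i → i ≤ n - 1 → uval n π (i - 1) < uval n π i →
    uval n π i < uval n π (i + 1))

lemma uval_one_pos (n : ℕ) (π : Equiv.Perm (Fin n)) (hn : 1 ≤ n) :
    0 < uval n π 1 := by
  have := uval_mem n π 1 le_rfl hn
  rw [Finset.mem_Icc] at this; omega

lemma peak_subset_iff (n m : ℕ) (π : Equiv.Perm (Fin n)) (h2 : 2 ≤ m) (hm : m ≤ n - 1)
    (hn : 3 ≤ n) :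
    sPeakSetHat n π ⊆ {m - 1, m} ↔ Q n m π := by
  constructor
  · intro hsub
    constructor
    · intro i
      induction i using Nat.strong_induction_on with
      | _ i ih =>
        intro hi1 hi2
        have hprev : uval n π (i - 1) < uval n π i := by
          rcases Nat.eq_or_lt_of_le hi1 with h1 | h1
          · rw [← h1]; simpa [uval_zero] using uval_one_pos n π (by omega)
          · have := ih (i - 1) (by omega) (by omega) (by omega)
            have hi1' : i - 1 + 1 = i := by omega
            rwa [hi1'] at this
        by_contra hcon
        push_neg at hcon
        have hne : uval n π (i + 1) ≠ uval n π i := fun h =>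
          by have := uval_inj n π (by omega) (by omega) h; omega
        have hlt : uval n π (i + 1) < uval n π i := by omega
        have : i ∈ sPeakSetHat n π := by
          rw [mem_peakHat]
          exact ⟨by simp [Finset.mem_Icc]; omega, hprev, hlt⟩
        have := hsub this
        simp only [Finset.mem_insert, Finset.mem_singleton] at this
        omega
    · intro i hi1 hi2 hrise
      by_contra hcon
      push_neg at hcon
      have hne : uval n π (i + 1) ≠ uval n π i := fun h =>
        by have := uval_inj n π (by omega) (by omega) h; omega
      have hlt : uval n π (i + 1) < uval n π i := by omega
      have : i ∈ sPeakSetHat n π := by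
        rw [mem_peakHat]
        exact ⟨by simp [Finset.mem_Icc]; omega, hrise, hlt⟩
      have := hsub this
      simp only [Finset.mem_insert, Finset.mem_singleton] at this
      omega
  · intro hQ i hi
    rw [mem_peakHat] at hi
    obtain ⟨hrange, hup, hdown⟩ := hi
    rw [Finset.mem_Icc] at hrange
    simp only [Finset.mem_insert, Finset.mem_singleton]
    by_contra hcon
    push_neg at hcon
    rcases Nat.lt_or_ge i m with him | him
    · have : i ≤ m - 2 := by omega
      have := hQ.1 i hrange.1 this
      omega
    · have : m + 1 ≤ i := by omega
      have := hQ.2 i this hrange.2 hup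
      omega

lemma uval_refl (n : ℕ) (i : ℕ) (h1 : 1 ≤ i) (h2 : i ≤ n) :
    uval n (Equiv.refl (Fin n)) i = i := by
  rw [uval_eq n _ i h1 h2]
  simp; omega

lemma peak_empty_iff (n : ℕ) (hn : 1 ≤ n) (π : Equiv.Perm (Fin n)) :
    sPeakSetHat n π = ∅ ↔ π = Equiv.refl (Fin n) := by
  constructor
  · intro hemp
    have incr : ∀ i, 1 ≤ i → i ≤ n - 1 → uval n π i < uval n π (i + 1) := by
      intro i
      induction i using Nat.strong_induction_on with
      | _ i ih =>
        intro hi1 hi2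
        have hprev : uval n π (i - 1) < uval n π i := by
          rcases Nat.eq_or_lt_of_le hi1 with h1 | h1
          · rw [← h1]; simpa [uval_zero] using uval_one_pos n π hn
          · have := ih (i - 1) (by omega) (by omega) (by omega)
            have hi1' : i - 1 + 1 = i := by omega
            rwa [hi1'] at this
        by_contra hcon
        push_neg at hcon
        have hne : uval n π (i + 1) ≠ uval n π i := fun h =>
          by have := uval_inj n π (by omega) (by omega) h; omega
        have : i ∈ sPeakSetHat n π := by
          rw [mem_peakHat]
          exact ⟨by simp [Finset.mem_Icc]; omega, hprev, by omega⟩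
        rw [hemp] at this
        exact absurd this (Finset.notMem_empty i)
    have hub : ∀ i, 1 ≤ i → i ≤ n → uval n π i ≤ i := by
      intro i hi1 hi2
      by_contra hcon
      push_neg at hcon
      have : ∀ j, i ≤ j → j ≤ n → j < uval n π j := by
        intro j hj1 hj2
        induction j with
        | zero => omega
        | succ k ih =>
          rcases Nat.lt_or_ge k i with hk | hk
          · have hik : i = k + 1 := by omega
            rw [← hik]
            exact hcon
          · have hk1 : 1 ≤ k := by omega
            have h1 := ih hk (by omega)
            have h2 := incr k hk1 (by omega)
            omega
      have h1 := this n (by omega) le_rfl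
      have h2 := uval_mem n π n (by omega) le_rfl
      rw [Finset.mem_Icc] at h2
      omega
    have hlb : ∀ i, 1 ≤ i → i ≤ n → i ≤ uval n π i := by
      intro i hi1 hi2
      induction i with
      | zero => omega
      | succ k ih =>
        rcases Nat.eq_zero_or_pos k with hk | hk
        · subst hk; exact uval_one_pos n π hn
        · have h1 := ih hk (by omega)
          have h2 := incr k hk (by omega)
          omega
    apply perm_ext_of_uval
    intro i hi
    rw [Finset.mem_Icc] at hi
    rw [uval_refl n i hi.1 hi.2]
    have h1 := hub i hi.1 hi.2
    have h2 := hlb i hi.1 hi.2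
    omega
  · intro h
    subst h
    ext i
    rw [mem_peakHat]
    simp only [Finset.notMem_empty, iff_false]
    rintro ⟨hr, -, hd⟩
    rw [Finset.mem_Icc] at hr
    rw [uval_refl n i hr.1 (by omega), uval_refl n (i+1) (by omega) (by omega)] at hd
    omega

lemma PPhat_empty (n : ℕ) (hn : 1 ≤ n) : PPhat n ∅ = 1 := by
  unfold PPhat
  have : (Finset.univ.filter fun π : Equiv.Perm (Fin n) => sPeakSetHat n π = ∅)
      = {Equiv.refl (Fin n)} := by
    ext π
    simp [peak_empty_iff n hn π]
  rw [this, Finset.card_singleton]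

end Stmt16Aux
namespace Stmt16Aux

lemma chain_gt {f : ℕ → ℕ} {a b : ℕ} (h : ∀ i, a ≤ i → i < b → f (i + 1) < f i) :
    ∀ i j, a ≤ i → i < j → j ≤ b → f j < f i := by
  intro i j hai hij hjb
  induction j with
  | zero => omega
  | succ k ih =>
    rcases Nat.lt_or_ge i k with hik | hik
    · exact lt_trans (h k (by omega) (by omega)) (ih hik (by omega))
    · have : i = k := by omega
      subst this
      exact h i hai (by omega)

lemma down_closed_iff {S : Finset ℕ} {m M : ℕ} (hS : S ⊆ Finset.Icc m M)
    (hdown : ∀ i ∈ S, m < i → i - 1 ∈ S) :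
    ∀ i, i ∈ S ↔ m ≤ i ∧ i < m + S.card := by
  have key : ∀ d, ∀ i ∈ S, m ≤ i - d → i - d ∈ S := by
    intro d
    induction d with
    | zero => intro i hi _; simpa using hi
    | succ k ih =>
      intro i hi hle
      have h1 : i - k ∈ S := ih i hi (by omega)
      by_cases hlt : m < i - k
      · have h2 := hdown (i - k) h1 hlt
        have h3 : i - (k + 1) = i - k - 1 := by omega
        rw [h3]
        exact h2
      · have h3 : i - (k + 1) = i - k := by omega
        rw [h3]
        exact h1
  have key2 : ∀ i ∈ S, ∀ j, m ≤ j → j ≤ i → j ∈ S := by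
    intro i hi j hj1 hj2
    have := key (i - j) i hi (by omega)
    have hij : i - (i - j) = j := by omega
    rwa [hij] at this
  intro i
  constructor
  · intro hi
    have hmi := hS hi
    rw [Finset.mem_Icc] at hmi
    refine ⟨hmi.1, ?_⟩
    have hsub : Finset.Icc m i ⊆ S := by
      intro j hj
      rw [Finset.mem_Icc] at hj
      exact key2 i hi j hj.1 hj.2
    have := Finset.card_le_card hsub
    rw [Nat.card_Icc] at this
    omega
  · rintro ⟨h1, h2⟩
    by_contra hcon
    have hsub : S ⊆ Finset.Ico m i := by
      intro j hj
      rw [Finset.mem_Ico]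
      have hjm := hS hj
      rw [Finset.mem_Icc] at hjm
      refine ⟨hjm.1, ?_⟩
      by_contra hcc
      push_neg at hcc
      exact hcon (key2 j hj i h1 hcc)
    have := Finset.card_le_card hsub
    rw [Nat.card_Ico] at this
    omega

/-- minimum with default 0 -/
def bm (s : Finset ℕ) : ℕ := if h : s.Nonempty then s.min' h else 0

lemma bm_mem {s : Finset ℕ} (h : s.Nonempty) : bm s ∈ s := by
  rw [bm, dif_pos h]; exact s.min'_mem h

lemma bm_le {s : Finset ℕ} (h : s.Nonempty) {x : ℕ} (hx : x ∈ s) : bm s ≤ x := by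
  rw [bm, dif_pos h]; exact s.min'_le x hx

/-- values of the first `m-1` positions -/
def Aset (n m : ℕ) (π : Equiv.Perm (Fin n)) : Finset ℕ :=
  (Finset.Icc 1 (m - 1)).image (uval n π)

/-- descending positions in the tail -/
def DscSet (n m : ℕ) (π : Equiv.Perm (Fin n)) : Finset ℕ :=
  (Finset.Icc m (n - 1)).filter fun i => uval n π (i + 1) < uval n π i

/-- values at descending tail positions -/
def Dset (n m : ℕ) (π : Equiv.Perm (Fin n)) : Finset ℕ :=
  (DscSet n m π).image (uval n π)

def tOf (n m : ℕ) (π : Equiv.Perm (Fin n)) : ℕ := m + (DscSet n m π).card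

/-- the tail values -/
def Bset (n m : ℕ) : Finset ℕ → Finset ℕ := fun A => Finset.Icc 1 n \ A

section Structure

variable {n m : ℕ} {π : Equiv.Perm (Fin n)} (h2 : 2 ≤ m) (hm : m ≤ n - 1) (hn : 3 ≤ n)
  (hQ : Q n m π)

include h2 hm hn hQ

lemma dsc_iff : ∀ i, i ∈ DscSet n m π ↔ m ≤ i ∧ i < tOf n m π := by
  apply down_closed_iff (M := n - 1)
  · exact Finset.filter_subset _ _
  · intro i hi hmi
    rw [DscSet, Finset.mem_filter, Finset.mem_Icc] at hi
    obtain ⟨⟨hi1, hi2⟩, hdesc⟩ := hi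
    rw [DscSet, Finset.mem_filter, Finset.mem_Icc]
    refine ⟨⟨by omega, by omega⟩, ?_⟩
    by_contra hcon
    push_neg at hcon
    have hne : uval n π (i - 1 + 1) ≠ uval n π (i - 1) := fun h =>
      by have := uval_inj n π (by omega) (by omega) h; omega
    rw [show i - 1 + 1 = i from by omega] at hne hcon
    have hrise : uval n π (i - 1) < uval n π i := by omega
    have := hQ.2 i (by omega) hi2 hrise
    omega

lemma t_le : tOf n m π ≤ n := by
  rcases Nat.eq_zero_or_pos (DscSet n m π).card with h0 | h0
  · rw [tOf, h0]; omega
  · have hmem : m + (DscSet n m π).card - 1 ∈ DscSet n m π := by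
      rw [dsc_iff h2 hm hn hQ, tOf]; omega
    have hsub : DscSet n m π ⊆ Finset.Icc m (n - 1) := by
      rw [DscSet]; exact Finset.filter_subset _ _
    have h1 := hsub hmem
    rw [Finset.mem_Icc] at h1
    rw [tOf]; omega

lemma desc_adj : ∀ i, m ≤ i → i < tOf n m π → uval n π (i + 1) < uval n π i := by
  intro i hi1 hi2
  have : i ∈ DscSet n m π := by rw [dsc_iff h2 hm hn hQ]; exact ⟨hi1, hi2⟩
  rw [DscSet, Finset.mem_filter] at this
  exact this.2

lemma asc_adj : ∀ i, tOf n m π ≤ i → i ≤ n - 1 → uval n π i < uval n π (i + 1) := by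
  intro i hi1 hi2
  have hni : i ∉ DscSet n m π := by rw [dsc_iff h2 hm hn hQ]; omega
  rw [DscSet, Finset.mem_filter, Finset.mem_Icc] at hni
  have hm_le_i : m ≤ i := le_trans (by rw [tOf]; omega) hi1
  push_neg at hni
  have := hni ⟨hm_le_i, hi2⟩
  have hne : uval n π i ≠ uval n π (i + 1) := fun h =>
    by have := uval_inj n π (by omega) (by omega) h; omega
  omega

lemma prefix_adj : ∀ i, 1 ≤ i → i < m - 1 → uval n π i < uval n π (i + 1) := by
  intro i hi1 hi2
  exact hQ.1 i hi1 (by omega)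

end Structure

end Stmt16Aux
namespace Stmt16Aux

lemma card_Aset (n m : ℕ) (π : Equiv.Perm (Fin n)) (h2 : 2 ≤ m) (hm : m ≤ n - 1) (hn : 3 ≤ n) :
    (Aset n m π).card = m - 1 := by
  have hinj : Set.InjOn (uval n π) (Finset.Icc 1 (m - 1) : Finset ℕ) :=
    Set.InjOn.mono (by intro x hx; simp only [Finset.coe_Icc, Set.mem_Icc] at hx ⊢; omega)
      (uval_injOn n π)
  rw [Aset, Finset.card_image_of_injOn hinj, Nat.card_Icc]
  omega

lemma Aset_subset (n m : ℕ) (π : Equiv.Perm (Fin n)) (h2 : 2 ≤ m) (hm : m ≤ n - 1) (hn : 3 ≤ n) :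
    Aset n m π ⊆ Finset.Icc 1 n := by
  intro x hx
  rw [Aset, Finset.mem_image] at hx
  obtain ⟨i, hi, rfl⟩ := hx
  rw [Finset.mem_Icc] at hi
  exact uval_mem n π i hi.1 (by omega)

lemma Icc_split (a b c : ℕ) (h1 : a ≤ b + 1) (h2 : b ≤ c) :
    Finset.Icc a c = Finset.Icc a b ∪ Finset.Icc (b + 1) c := by
  ext x; simp only [Finset.mem_Icc, Finset.mem_union]; omega

lemma image_disj (n : ℕ) (π : Equiv.Perm (Fin n)) {s t : Finset ℕ}
    (hs : s ⊆ Finset.Icc 1 n) (ht : t ⊆ Finset.Icc 1 n) (hst : Disjoint s t) :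
    Disjoint (s.image (uval n π)) (t.image (uval n π)) := by
  rw [Finset.disjoint_left]
  intro x hxs hxt
  rw [Finset.mem_image] at hxs hxt
  obtain ⟨i, hi, rfl⟩ := hxs
  obtain ⟨j, hj, hij⟩ := hxt
  have hi' := hs hi
  have hj' := ht hj
  rw [Finset.mem_Icc] at hi' hj'
  have := uval_inj n π hj'.2 hi'.2 hij
  subst this
  exact Finset.disjoint_left.mp hst hi hj

lemma image_tail (n m : ℕ) (π : Equiv.Perm (Fin n)) (h2 : 2 ≤ m) (hm : m ≤ n - 1) (hn : 3 ≤ n) :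
    (Finset.Icc m n).image (uval n π) = Bset n m (Aset n m π) := by
  have hsplit := Icc_split 1 (m - 1) n (by omega) (by omega)
  rw [show m - 1 + 1 = m from by omega] at hsplit
  have himg := uval_image n π
  rw [hsplit, Finset.image_union] at himg
  have hdisj : Disjoint (Aset n m π) ((Finset.Icc m n).image (uval n π)) := by
    apply image_disj n π _ _ _
    · intro x hx; rw [Finset.mem_Icc] at hx ⊢; omega
    · intro x hx; rw [Finset.mem_Icc] at hx ⊢; omega
    · rw [Finset.disjoint_left]; intro x h1 h2'
      rw [Finset.mem_Icc] at h1 h2'; omega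
  rw [← hsplit] at himg
  rw [show (Finset.Icc 1 (m - 1)).image (uval n π) = Aset n m π from rfl] at himg
  rw [Bset, ← himg]
  rw [Finset.union_sdiff_cancel_left hdisj]

section Structure2

variable {n m : ℕ} {π : Equiv.Perm (Fin n)} (h2 : 2 ≤ m) (hm : m ≤ n - 1) (hn : 3 ≤ n)
  (hQ : Q n m π)

include h2 hm hn hQ

lemma Bset_nonempty : (Bset n m (Aset n m π)).Nonempty := by
  rw [← image_tail n m π h2 hm hn]
  exact ⟨uval n π m, Finset.mem_image_of_mem _ (by rw [Finset.mem_Icc]; omega)⟩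

lemma uval_le_tail : ∀ j, m ≤ j → j ≤ n → uval n π (tOf n m π) ≤ uval n π j := by
  intro j hj1 hj2
  have ht1 : m ≤ tOf n m π := by rw [tOf]; omega
  have ht2 := t_le h2 hm hn hQ
  rcases Nat.lt_trichotomy j (tOf n m π) with h | h | h
  · exact le_of_lt (chain_gt (desc_adj h2 hm hn hQ) j (tOf n m π) hj1 h le_rfl)
  · rw [h]
  · refine le_of_lt (chain_lt ?_ (tOf n m π) j le_rfl h hj2)
    intro i hi1 hi2
    exact asc_adj h2 hm hn hQ i hi1 (by omega)

lemma uval_t_eq : uval n π (tOf n m π) = bm (Bset n m (Aset n m π)) := by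
  have hne := Bset_nonempty h2 hm hn hQ
  have ht1 : m ≤ tOf n m π := by rw [tOf]; omega
  have ht2 := t_le h2 hm hn hQ
  have hmem : uval n π (tOf n m π) ∈ Bset n m (Aset n m π) := by
    rw [← image_tail n m π h2 hm hn]
    exact Finset.mem_image_of_mem _ (by rw [Finset.mem_Icc]; omega)
  have h1 := bm_le hne hmem
  have h2' : uval n π (tOf n m π) ≤ bm (Bset n m (Aset n m π)) := by
    have hb : bm (Bset n m (Aset n m π)) ∈ (Finset.Icc m n).image (uval n π) := by
      rw [image_tail n m π h2 hm hn]; exact bm_mem hne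
    rw [Finset.mem_image] at hb
    obtain ⟨j, hj, hjeq⟩ := hb
    rw [Finset.mem_Icc] at hj
    rw [← hjeq]
    exact uval_le_tail h2 hm hn hQ j hj.1 hj.2
  omega

lemma DscSet_eq : DscSet n m π = Finset.Icc m (tOf n m π - 1) := by
  ext i
  rw [dsc_iff h2 hm hn hQ, Finset.mem_Icc, tOf]
  omega

lemma card_Dset : (Dset n m π).card = tOf n m π - m := by
  rw [Dset, Finset.card_image_of_injOn, DscSet_eq h2 hm hn hQ, Nat.card_Icc]
  · have := t_le h2 hm hn hQ
    rw [tOf]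
    omega
  · apply Set.InjOn.mono _ (uval_injOn n π)
    intro x hx
    rw [DscSet_eq h2 hm hn hQ] at hx
    have := t_le h2 hm hn hQ
    simp only [Finset.coe_Icc, Set.mem_Icc, Finset.mem_coe] at hx ⊢
    omega

lemma image_mid :
    (Finset.Icc m (tOf n m π)).image (uval n π)
      = insert (bm (Bset n m (Aset n m π))) (Dset n m π) := by
  have ht1 : m ≤ tOf n m π := by rw [tOf]; omega
  have hsplit : Finset.Icc m (tOf n m π) = insert (tOf n m π) (Finset.Icc m (tOf n m π - 1)) := by
    ext x
    simp only [Finset.mem_Icc, Finset.mem_insert]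
    omega
  rw [hsplit, Finset.image_insert, uval_t_eq h2 hm hn hQ, Dset, DscSet_eq h2 hm hn hQ]

lemma image_top :
    (Finset.Icc (tOf n m π + 1) n).image (uval n π)
      = Bset n m (Aset n m π) \ insert (bm (Bset n m (Aset n m π))) (Dset n m π) := by
  have ht1 : m ≤ tOf n m π := by rw [tOf]; omega
  have ht2 := t_le h2 hm hn hQ
  rw [← image_mid h2 hm hn hQ]
  have hsplit2 : Finset.Icc m n = Finset.Icc m (tOf n m π) ∪ Finset.Icc (tOf n m π + 1) n :=
    Icc_split m (tOf n m π) n (by omega) (by omega)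
  have himg := image_tail n m π h2 hm hn
  rw [hsplit2, Finset.image_union] at himg
  have hdisj : Disjoint ((Finset.Icc m (tOf n m π)).image (uval n π))
      ((Finset.Icc (tOf n m π + 1) n).image (uval n π)) := by
    apply image_disj n π
    · intro x hx; rw [Finset.mem_Icc] at hx ⊢; omega
    · intro x hx; rw [Finset.mem_Icc] at hx ⊢; omega
    · rw [Finset.disjoint_left]; intro x hx1 hx2
      rw [Finset.mem_Icc] at hx1 hx2; omega
  rw [← himg, Finset.union_sdiff_cancel_left hdisj]

lemma bm_notMem_Dset : bm (Bset n m (Aset n m π)) ∉ Dset n m π := by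
  rw [← uval_t_eq h2 hm hn hQ, Dset, DscSet_eq h2 hm hn hQ, Finset.mem_image]
  rintro ⟨i, hi, heq⟩
  rw [Finset.mem_Icc] at hi
  have ht1 : m ≤ tOf n m π := by rw [tOf]; omega
  have ht2 := t_le h2 hm hn hQ
  have := uval_inj n π (by omega) (by omega) heq
  omega

lemma Dset_subset : Dset n m π ⊆ Bset n m (Aset n m π) := by
  intro x hx
  rw [Dset, DscSet_eq h2 hm hn hQ, Finset.mem_image] at hx
  obtain ⟨i, hi, rfl⟩ := hx
  rw [Finset.mem_Icc] at hi
  have ht2 := t_le h2 hm hn hQ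
  rw [← image_tail n m π h2 hm hn]
  exact Finset.mem_image_of_mem _ (by rw [Finset.mem_Icc]; omega)

end Structure2

end Stmt16Aux
namespace Stmt16Aux

lemma sort_getD {s : Finset ℕ} {k j : ℕ} (h : s.card = k) (hj : j < k) :
    (s.sort (· ≤ ·)).getD j 0 = s.orderEmbOfFin h ⟨j, hj⟩ := by
  rw [Finset.orderEmbOfFin_apply]
  exact List.getD_eq_getElem _ _ (by rw [Finset.length_sort, h]; exact hj)

/-- the canonical value function built from the data `(A, D)` -/
def wfun (n m : ℕ) (A D : Finset ℕ) : ℕ → ℕ := fun i =>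
  if 1 ≤ i ∧ i ≤ m - 1 then (A.sort (· ≤ ·)).getD (i - 1) 0
  else if m ≤ i ∧ i ≤ m + D.card then
    ((insert (bm (Bset n m A)) D).sort (· ≤ ·)).getD (m + D.card - i) 0
  else if m + D.card + 1 ≤ i ∧ i ≤ n then
    ((Bset n m A \ insert (bm (Bset n m A)) D).sort (· ≤ ·)).getD (i - (m + D.card) - 1) 0
  else 0

section Construction

variable {n m : ℕ} {A D : Finset ℕ} (h2 : 2 ≤ m) (hm : m ≤ n - 1) (hn : 3 ≤ n)
  (vA : A ⊆ Finset.Icc 1 n) (cA : A.card = m - 1)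
  (vD : D ⊆ (Bset n m A).erase (bm (Bset n m A)))

include h2 hm hn vA cA vD

lemma card_Bset : (Bset n m A).card = n - m + 1 := by
  rw [Bset, Finset.card_sdiff_of_subset vA, Nat.card_Icc, cA]
  omega

lemma Bset_nonempty' : (Bset n m A).Nonempty := by
  rw [← Finset.card_pos, card_Bset h2 hm hn vA cA vD]
  omega

lemma bm_mem_B : bm (Bset n m A) ∈ Bset n m A := bm_mem (Bset_nonempty' h2 hm hn vA cA vD)

lemma D_sub_B : D ⊆ Bset n m A := vD.trans (Finset.erase_subset _ _)

lemma bm_notMem_D : bm (Bset n m A) ∉ D := fun h => by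
  have := vD h
  rw [Finset.mem_erase] at this
  exact this.1 rfl

lemma card_E : (insert (bm (Bset n m A)) D).card = D.card + 1 := by
  rw [Finset.card_insert_of_notMem (bm_notMem_D h2 hm hn vA cA vD)]

lemma card_D_le : D.card ≤ n - m := by
  have h1 := Finset.card_le_card vD
  have h2' := Finset.card_erase_of_mem (bm_mem_B h2 hm hn vA cA vD)
  rw [card_Bset h2 hm hn vA cA vD] at h2'
  omega

lemma E_sub_B : insert (bm (Bset n m A)) D ⊆ Bset n m A := by
  rw [Finset.insert_subset_iff]
  exact ⟨bm_mem_B h2 hm hn vA cA vD, D_sub_B h2 hm hn vA cA vD⟩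

lemma card_F : (Bset n m A \ insert (bm (Bset n m A)) D).card = n - (m + D.card) := by
  rw [Finset.card_sdiff_of_subset (E_sub_B h2 hm hn vA cA vD), card_Bset h2 hm hn vA cA vD,
    card_E h2 hm hn vA cA vD]
  have := card_D_le h2 hm hn vA cA vD
  omega

lemma B_sub_Icc : Bset n m A ⊆ Finset.Icc 1 n := Finset.sdiff_subset

lemma wfun_lo (i : ℕ) (hi1 : 1 ≤ i) (hi2 : i ≤ m - 1) :
    wfun n m A D i = A.orderEmbOfFin cA ⟨i - 1, by omega⟩ := by
  rw [wfun, if_pos ⟨hi1, hi2⟩, sort_getD cA (by omega)]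

lemma wfun_mid (i : ℕ) (hi1 : m ≤ i) (hi2 : i ≤ m + D.card) :
    wfun n m A D i = (insert (bm (Bset n m A)) D).orderEmbOfFin (card_E h2 hm hn vA cA vD)
      ⟨m + D.card - i, by omega⟩ := by
  rw [wfun, if_neg (by omega), if_pos ⟨hi1, hi2⟩, sort_getD (card_E h2 hm hn vA cA vD) (by omega)]

lemma wfun_hi (i : ℕ) (hi1 : m + D.card + 1 ≤ i) (hi2 : i ≤ n) :
    wfun n m A D i = (Bset n m A \ insert (bm (Bset n m A)) D).orderEmbOfFin
      (card_F h2 hm hn vA cA vD) ⟨i - (m + D.card) - 1, by omega⟩ := by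
  rw [wfun, if_neg (by omega), if_neg (by omega), if_pos ⟨hi1, hi2⟩,
    sort_getD (card_F h2 hm hn vA cA vD) (by omega)]

lemma wfun_mem_seg (i : ℕ) (hi1 : 1 ≤ i) (hi2 : i ≤ n) :
    (1 ≤ i ∧ i ≤ m - 1 ∧ wfun n m A D i ∈ A) ∨
    (m ≤ i ∧ i ≤ m + D.card ∧ wfun n m A D i ∈ insert (bm (Bset n m A)) D) ∨
    (m + D.card + 1 ≤ i ∧ i ≤ n ∧
      wfun n m A D i ∈ Bset n m A \ insert (bm (Bset n m A)) D) := by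
  have hD := card_D_le h2 hm hn vA cA vD
  rcases Nat.lt_or_ge i m with h | h
  · left
    refine ⟨hi1, by omega, ?_⟩
    rw [wfun_lo h2 hm hn vA cA vD i hi1 (by omega)]
    exact Finset.orderEmbOfFin_mem _ _ _
  · rcases le_or_gt i (m + D.card) with h' | h'
    · right; left
      refine ⟨h, h', ?_⟩
      rw [wfun_mid h2 hm hn vA cA vD i h h']
      exact Finset.orderEmbOfFin_mem _ _ _
    · right; right
      refine ⟨h', hi2, ?_⟩
      rw [wfun_hi h2 hm hn vA cA vD i h' hi2]
      exact Finset.orderEmbOfFin_mem _ _ _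

lemma wfun_mem (i : ℕ) (hi1 : 1 ≤ i) (hi2 : i ≤ n) : wfun n m A D i ∈ Finset.Icc 1 n := by
  rcases wfun_mem_seg h2 hm hn vA cA vD i hi1 hi2 with ⟨_, _, h⟩ | ⟨_, _, h⟩ | ⟨_, _, h⟩
  · exact vA h
  · exact B_sub_Icc h2 hm hn vA cA vD (E_sub_B h2 hm hn vA cA vD h)
  · exact B_sub_Icc h2 hm hn vA cA vD (Finset.sdiff_subset h)

lemma wfun_pos (i : ℕ) (hi1 : 1 ≤ i) (hi2 : i ≤ n) : 1 ≤ wfun n m A D i := by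
  have := wfun_mem h2 hm hn vA cA vD i hi1 hi2
  rw [Finset.mem_Icc] at this
  exact this.1

lemma disj_AB : Disjoint A (Bset n m A) := Finset.disjoint_sdiff

lemma wfun_inj (i j : ℕ) (hi1 : 1 ≤ i) (hi2 : i ≤ n) (hj1 : 1 ≤ j) (hj2 : j ≤ n)
    (heq : wfun n m A D i = wfun n m A D j) : i = j := by
  have hdAB := disj_AB (n := n) (m := m) (A := A) h2 hm hn vA cA vD
  have hdEF : Disjoint (insert (bm (Bset n m A)) D)
      (Bset n m A \ insert (bm (Bset n m A)) D) := Finset.disjoint_sdiff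
  rcases wfun_mem_seg h2 hm hn vA cA vD i hi1 hi2 with ⟨ha1, ha2, ha3⟩ | ⟨ha1, ha2, ha3⟩ | ⟨ha1, ha2, ha3⟩ <;>
    rcases wfun_mem_seg h2 hm hn vA cA vD j hj1 hj2 with ⟨hb1, hb2, hb3⟩ | ⟨hb1, hb2, hb3⟩ | ⟨hb1, hb2, hb3⟩
  · -- both in A
    rw [wfun_lo h2 hm hn vA cA vD i ha1 ha2, wfun_lo h2 hm hn vA cA vD j hb1 hb2] at heq
    have := (A.orderEmbOfFin cA).injective heq
    rw [Fin.mk.injEq] at this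
    omega
  · exact absurd (heq ▸ ha3) (Finset.disjoint_left.mp hdAB · (E_sub_B h2 hm hn vA cA vD hb3))
  · exact absurd (heq ▸ ha3) (Finset.disjoint_left.mp hdAB · (Finset.sdiff_subset hb3))
  · exact absurd (heq ▸ hb3)
      (fun hh => Finset.disjoint_left.mp hdAB hh (E_sub_B h2 hm hn vA cA vD ha3))
  · rw [wfun_mid h2 hm hn vA cA vD i ha1 ha2, wfun_mid h2 hm hn vA cA vD j hb1 hb2] at heq
    have := ((insert (bm (Bset n m A)) D).orderEmbOfFin _).injective heq
    rw [Fin.mk.injEq] at this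
    omega
  · exact absurd (heq ▸ ha3) (Finset.disjoint_left.mp hdEF · hb3)
  · exact absurd (heq ▸ hb3) (fun hh => Finset.disjoint_left.mp hdAB hh
      (Finset.sdiff_subset ha3))
  · exact absurd (heq ▸ hb3) (fun hh => Finset.disjoint_left.mp hdEF hh ha3)
  · rw [wfun_hi h2 hm hn vA cA vD i ha1 ha2, wfun_hi h2 hm hn vA cA vD j hb1 hb2] at heq
    have := ((Bset n m A \ insert (bm (Bset n m A)) D).orderEmbOfFin _).injective heq
    rw [Fin.mk.injEq] at this
    omega

lemma bm_eq_min'E : bm (Bset n m A)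
    = (insert (bm (Bset n m A)) D).min' ⟨_, Finset.mem_insert_self _ _⟩ := by
  apply le_antisymm
  · apply Finset.le_min'
    intro y hy
    rcases Finset.mem_insert.mp hy with h | h
    · exact le_of_eq h.symm
    · exact bm_le (Bset_nonempty' h2 hm hn vA cA vD) (D_sub_B h2 hm hn vA cA vD h)
  · exact Finset.min'_le _ _ (Finset.mem_insert_self _ _)

lemma wfun_t : wfun n m A D (m + D.card) = bm (Bset n m A) := by
  have hD := card_D_le h2 hm hn vA cA vD
  rw [wfun_mid h2 hm hn vA cA vD (m + D.card) (by omega) le_rfl]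
  have : (⟨m + D.card - (m + D.card), by omega⟩ : Fin (D.card + 1)) = ⟨0, by omega⟩ := by
    apply Fin.ext; simp
  rw [this, Finset.orderEmbOfFin_zero _ (by omega)]
  exact (bm_eq_min'E h2 hm hn vA cA vD).symm

lemma wadj_lo (i : ℕ) (hi1 : 1 ≤ i) (hi2 : i < m - 1) :
    wfun n m A D i < wfun n m A D (i + 1) := by
  rw [wfun_lo h2 hm hn vA cA vD i hi1 (by omega),
    wfun_lo h2 hm hn vA cA vD (i + 1) (by omega) (by omega)]
  exact (A.orderEmbOfFin cA).strictMono (by simp [Fin.lt_def]; omega)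

lemma wadj_mid (i : ℕ) (hi1 : m ≤ i) (hi2 : i < m + D.card) :
    wfun n m A D (i + 1) < wfun n m A D i := by
  rw [wfun_mid h2 hm hn vA cA vD i hi1 (by omega),
    wfun_mid h2 hm hn vA cA vD (i + 1) (by omega) (by omega)]
  exact ((insert (bm (Bset n m A)) D).orderEmbOfFin _).strictMono (by simp [Fin.lt_def]; omega)

lemma wadj_hi (i : ℕ) (hi1 : m + D.card ≤ i) (hi2 : i < n) :
    wfun n m A D i < wfun n m A D (i + 1) := by
  rcases Nat.eq_or_lt_of_le hi1 with h | h
  · rw [← h, wfun_t h2 hm hn vA cA vD]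
    have hmem : wfun n m A D (m + D.card + 1) ∈ Bset n m A \ insert (bm (Bset n m A)) D := by
      rw [wfun_hi h2 hm hn vA cA vD (m + D.card + 1) le_rfl (by omega)]
      exact Finset.orderEmbOfFin_mem _ _ _
    rw [Finset.mem_sdiff, Finset.mem_insert] at hmem
    push_neg at hmem
    have h1 := bm_le (Bset_nonempty' h2 hm hn vA cA vD) hmem.1
    have h2' := hmem.2.1
    omega
  · rw [wfun_hi h2 hm hn vA cA vD i (by omega) (by omega),
      wfun_hi h2 hm hn vA cA vD (i + 1) (by omega) (by omega)]
    exact ((Bset n m A \ insert (bm (Bset n m A)) D).orderEmbOfFin _).strictMono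
      (by simp [Fin.lt_def]; omega)

end Construction

end Stmt16Aux
namespace Stmt16Aux

/-- permutation underlying function from data `(A,D)` -/
def gfun (n m : ℕ) (A D : Finset ℕ) : Fin n → Fin n := fun x =>
  if h : wfun n m A D (x.val + 1) - 1 < n then ⟨wfun n m A D (x.val + 1) - 1, h⟩ else x

section Construction2

variable {n m : ℕ} {A D : Finset ℕ} (h2 : 2 ≤ m) (hm : m ≤ n - 1) (hn : 3 ≤ n)
  (vA : A ⊆ Finset.Icc 1 n) (cA : A.card = m - 1)
  (vD : D ⊆ (Bset n m A).erase (bm (Bset n m A)))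

include h2 hm hn vA cA vD

lemma wfun_lt (x : Fin n) : wfun n m A D (x.val + 1) - 1 < n := by
  have := wfun_mem h2 hm hn vA cA vD (x.val + 1) (by omega) (by omega)
  rw [Finset.mem_Icc] at this
  omega

lemma gfun_apply (x : Fin n) :
    gfun n m A D x = ⟨wfun n m A D (x.val + 1) - 1, wfun_lt h2 hm hn vA cA vD x⟩ := by
  rw [gfun, dif_pos (wfun_lt h2 hm hn vA cA vD x)]

lemma gfun_bij : Function.Bijective (gfun n m A D) := by
  rw [Fintype.bijective_iff_injective_and_card]
  refine ⟨?_, rfl⟩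
  intro x y hxy
  rw [gfun_apply h2 hm hn vA cA vD, gfun_apply h2 hm hn vA cA vD, Fin.mk.injEq] at hxy
  have hx := wfun_pos h2 hm hn vA cA vD (x.val + 1) (by omega) (by omega)
  have hy := wfun_pos h2 hm hn vA cA vD (y.val + 1) (by omega) (by omega)
  have heq : wfun n m A D (x.val + 1) = wfun n m A D (y.val + 1) := by omega
  have := wfun_inj h2 hm hn vA cA vD _ _ (by omega) (by omega) (by omega) (by omega) heq
  exact Fin.ext (by omega)

end Construction2

/-- permutation from data `(A,D)` -/
noncomputable def phi (n m : ℕ) (A D : Finset ℕ)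
    (h : Function.Bijective (gfun n m A D)) : Equiv.Perm (Fin n) :=
  Equiv.ofBijective _ h

section Construction3

variable {n m : ℕ} {A D : Finset ℕ} (h2 : 2 ≤ m) (hm : m ≤ n - 1) (hn : 3 ≤ n)
  (vA : A ⊆ Finset.Icc 1 n) (cA : A.card = m - 1)
  (vD : D ⊆ (Bset n m A).erase (bm (Bset n m A)))

include h2 hm hn vA cA vD

lemma uval_phi (i : ℕ) (hi1 : 1 ≤ i) (hi2 : i ≤ n) :
    uval n (phi n m A D (gfun_bij h2 hm hn vA cA vD)) i = wfun n m A D i := by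
  rw [uval_eq n _ i hi1 hi2]
  have hco : (phi n m A D (gfun_bij h2 hm hn vA cA vD)) ⟨i - 1, by omega⟩
      = gfun n m A D ⟨i - 1, by omega⟩ := rfl
  rw [hco, gfun_apply h2 hm hn vA cA vD]
  simp only []
  have hiv : (⟨i - 1, by omega⟩ : Fin n).val + 1 = i := by simp; omega
  rw [hiv]
  have := wfun_pos h2 hm hn vA cA vD i hi1 hi2
  omega

lemma Q_phi : Q n m (phi n m A D (gfun_bij h2 hm hn vA cA vD)) := by
  have hD := card_D_le h2 hm hn vA cA vD
  constructor
  · intro i hi1 hi2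
    rw [uval_phi h2 hm hn vA cA vD i hi1 (by omega),
      uval_phi h2 hm hn vA cA vD (i + 1) (by omega) (by omega)]
    exact wadj_lo h2 hm hn vA cA vD i hi1 (by omega)
  · intro i hi1 hi2 hrise
    rw [uval_phi h2 hm hn vA cA vD (i - 1) (by omega) (by omega),
      uval_phi h2 hm hn vA cA vD i (by omega) (by omega)] at hrise
    rw [uval_phi h2 hm hn vA cA vD i (by omega) (by omega),
      uval_phi h2 hm hn vA cA vD (i + 1) (by omega) (by omega)]
    rcases le_or_gt i (m + D.card) with h | h
    · exfalso
      have := wadj_mid h2 hm hn vA cA vD (i - 1) (by omega) (by omega)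
      rw [show i - 1 + 1 = i from by omega] at this
      omega
    · exact wadj_hi h2 hm hn vA cA vD i (by omega) (by omega)

lemma Aset_phi : Aset n m (phi n m A D (gfun_bij h2 hm hn vA cA vD)) = A := by
  rw [Aset]
  apply Finset.Subset.antisymm
  · intro x hx
    rw [Finset.mem_image] at hx
    obtain ⟨i, hi, rfl⟩ := hx
    rw [Finset.mem_Icc] at hi
    rw [uval_phi h2 hm hn vA cA vD i hi.1 (by omega),
      wfun_lo h2 hm hn vA cA vD i hi.1 hi.2]
    exact Finset.orderEmbOfFin_mem _ _ _
  · intro a ha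
    have : a ∈ Set.range (A.orderEmbOfFin cA) := by
      rw [Finset.range_orderEmbOfFin]; exact ha
    obtain ⟨j, hj⟩ := this
    rw [Finset.mem_image]
    refine ⟨j.val + 1, by rw [Finset.mem_Icc]; omega, ?_⟩
    rw [uval_phi h2 hm hn vA cA vD (j.val + 1) (by omega) (by omega),
      wfun_lo h2 hm hn vA cA vD (j.val + 1) (by omega) (by omega)]
    rw [← hj]
    exact congrArg _ (Fin.ext (by simp))

lemma DscSet_phi :
    DscSet n m (phi n m A D (gfun_bij h2 hm hn vA cA vD)) = Finset.Icc m (m + D.card - 1) := by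
  have hD := card_D_le h2 hm hn vA cA vD
  ext i
  rw [DscSet, Finset.mem_filter, Finset.mem_Icc, Finset.mem_Icc]
  constructor
  · rintro ⟨⟨hi1, hi2⟩, hdesc⟩
    rw [uval_phi h2 hm hn vA cA vD i (by omega) (by omega),
      uval_phi h2 hm hn vA cA vD (i + 1) (by omega) (by omega)] at hdesc
    refine ⟨hi1, ?_⟩
    by_contra hcon
    push_neg at hcon
    have := wadj_hi h2 hm hn vA cA vD i (by omega) (by omega)
    omega
  · rintro ⟨hi1, hi2⟩
    have hik : i < m + D.card := by omega
    refine ⟨⟨hi1, by omega⟩, ?_⟩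
    rw [uval_phi h2 hm hn vA cA vD i (by omega) (by omega),
      uval_phi h2 hm hn vA cA vD (i + 1) (by omega) (by omega)]
    exact wadj_mid h2 hm hn vA cA vD i hi1 hik

lemma Dset_phi : Dset n m (phi n m A D (gfun_bij h2 hm hn vA cA vD)) = D := by
  have hD := card_D_le h2 hm hn vA cA vD
  rw [Dset, DscSet_phi h2 hm hn vA cA vD]
  apply Finset.Subset.antisymm
  · intro x hx
    rw [Finset.mem_image] at hx
    obtain ⟨i, hi, rfl⟩ := hx
    rw [Finset.mem_Icc] at hi
    rw [uval_phi h2 hm hn vA cA vD i (by omega) (by omega),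
      wfun_mid h2 hm hn vA cA vD i hi.1 (by omega)]
    have hmem := Finset.orderEmbOfFin_mem (insert (bm (Bset n m A)) D)
      (card_E h2 hm hn vA cA vD) ⟨m + D.card - i, by omega⟩
    rcases Finset.mem_insert.mp hmem with h | h
    · exfalso
      have hbm : bm (Bset n m A) = (insert (bm (Bset n m A)) D).orderEmbOfFin
          (card_E h2 hm hn vA cA vD) ⟨0, by omega⟩ := by
        rw [Finset.orderEmbOfFin_zero _ (by omega)]
        exact bm_eq_min'E h2 hm hn vA cA vD
      have h' := h.trans hbm
      have := ((insert (bm (Bset n m A)) D).orderEmbOfFin _).injective h'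
      rw [Fin.mk.injEq] at this
      omega
    · exact h
  · intro d hd
    have hdE : d ∈ insert (bm (Bset n m A)) D := Finset.mem_insert_of_mem hd
    have : d ∈ Set.range ((insert (bm (Bset n m A)) D).orderEmbOfFin
        (card_E h2 hm hn vA cA vD)) := by
      rw [Finset.range_orderEmbOfFin]; exact hdE
    obtain ⟨j, hj⟩ := this
    have hj0 : j.val ≠ 0 := by
      intro h0
      have hbm : (insert (bm (Bset n m A)) D).orderEmbOfFin
          (card_E h2 hm hn vA cA vD) j = bm (Bset n m A) := by
        rw [show j = ⟨0, by omega⟩ from Fin.ext h0, Finset.orderEmbOfFin_zero _ (by omega)]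
        exact (bm_eq_min'E h2 hm hn vA cA vD).symm
      rw [hbm] at hj
      exact bm_notMem_D h2 hm hn vA cA vD (hj ▸ hd)
    have hjlt : j.val < D.card + 1 := j.isLt
    rw [Finset.mem_image]
    refine ⟨m + D.card - j.val, by rw [Finset.mem_Icc]; omega, ?_⟩
    rw [uval_phi h2 hm hn vA cA vD (m + D.card - j.val) (by omega) (by omega),
      wfun_mid h2 hm hn vA cA vD (m + D.card - j.val) (by omega) (by omega)]
    rw [← hj]
    exact congrArg _ (Fin.ext (by simp; omega))

end Construction3

end Stmt16Aux
namespace Stmt16Aux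

section Reconstruction

variable {n m : ℕ} {π : Equiv.Perm (Fin n)} (h2 : 2 ≤ m) (hm : m ≤ n - 1) (hn : 3 ≤ n)
  (hQ : Q n m π)

include h2 hm hn hQ

lemma vD_of : Dset n m π ⊆ (Bset n m (Aset n m π)).erase (bm (Bset n m (Aset n m π))) := by
  intro x hx
  rw [Finset.mem_erase]
  constructor
  · intro h
    exact bm_notMem_Dset h2 hm hn hQ (h ▸ hx)
  · exact Dset_subset h2 hm hn hQ hx

lemma recon_val : ∀ i, 1 ≤ i → i ≤ n →
    uval n π i = wfun n m (Aset n m π) (Dset n m π) i := by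
  have vA := Aset_subset n m π h2 hm hn
  have cA := card_Aset n m π h2 hm hn
  have vD := vD_of h2 hm hn hQ
  have hb : m + (Dset n m π).card = tOf n m π := by
    rw [card_Dset h2 hm hn hQ]
    have : m ≤ tOf n m π := by rw [tOf]; omega
    omega
  have ht2 := t_le h2 hm hn hQ
  -- segment 1
  have hf1 : (fun j : Fin (m - 1) => uval n π (j.val + 1))
      = (Aset n m π).orderEmbOfFin cA := by
    apply Finset.orderEmbOfFin_unique
    · intro j
      rw [Aset, Finset.mem_image]
      exact ⟨j.val + 1, by rw [Finset.mem_Icc]; omega, rfl⟩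
    · intro j j' hj
      rw [Fin.lt_def] at hj
      have hj'lt : j'.val < m - 1 := j'.isLt
      exact chain_lt (a := 1) (b := m - 1) (fun i hi1 hi2 => hQ.1 i hi1 (by omega))
        (j.val + 1) (j'.val + 1) (by omega) (by omega) (by omega)
  -- segment 2
  have hf2 : (fun j : Fin ((Dset n m π).card + 1) => uval n π (m + (Dset n m π).card - j.val))
      = (insert (bm (Bset n m (Aset n m π))) (Dset n m π)).orderEmbOfFin
          (card_E h2 hm hn vA cA vD) := by
    apply Finset.orderEmbOfFin_unique
    · intro j
      have hjlt : j.val < (Dset n m π).card + 1 := j.isLt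
      rw [← image_mid h2 hm hn hQ]
      exact Finset.mem_image_of_mem _ (by rw [Finset.mem_Icc]; omega)
    · intro j j' hj
      rw [Fin.lt_def] at hj
      have hjlt : j'.val < (Dset n m π).card + 1 := j'.isLt
      exact chain_gt (desc_adj h2 hm hn hQ) (m + (Dset n m π).card - j'.val)
        (m + (Dset n m π).card - j.val) (by omega) (by omega) (by omega)
  -- segment 3
  have hf3 : (fun j : Fin (n - (m + (Dset n m π).card)) =>
        uval n π (m + (Dset n m π).card + 1 + j.val))
      = ((Bset n m (Aset n m π)) \ insert (bm (Bset n m (Aset n m π))) (Dset n m π)).orderEmbOfFin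
          (card_F h2 hm hn vA cA vD) := by
    apply Finset.orderEmbOfFin_unique
    · intro j
      have hjlt : j.val < n - (m + (Dset n m π).card) := j.isLt
      rw [← image_top h2 hm hn hQ]
      exact Finset.mem_image_of_mem _ (by rw [Finset.mem_Icc]; omega)
    · intro j j' hj
      rw [Fin.lt_def] at hj
      have hjlt : j'.val < n - (m + (Dset n m π).card) := j'.isLt
      refine chain_lt (a := tOf n m π) (b := n) ?_ (m + (Dset n m π).card + 1 + j.val)
        (m + (Dset n m π).card + 1 + j'.val) (by omega) (by omega) (by omega)
      intro i hi1 hi2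
      exact asc_adj h2 hm hn hQ i hi1 (by omega)
  intro i hi1 hi2
  rcases Nat.lt_or_ge i m with h | h
  · rw [wfun_lo h2 hm hn vA cA vD i hi1 (by omega)]
    have := congrFun hf1 ⟨i - 1, by omega⟩
    simp only [] at this
    rw [show i - 1 + 1 = i from by omega] at this
    exact this
  · rcases le_or_gt i (m + (Dset n m π).card) with h' | h'
    · rw [wfun_mid h2 hm hn vA cA vD i h h']
      have := congrFun hf2 ⟨m + (Dset n m π).card - i, by omega⟩
      simp only [] at this
      rw [show m + (Dset n m π).card - (m + (Dset n m π).card - i) = i from by omega] at this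
      exact this
    · rw [wfun_hi h2 hm hn vA cA vD i (by omega) hi2]
      have := congrFun hf3 ⟨i - (m + (Dset n m π).card) - 1, by omega⟩
      simp only [] at this
      rw [show m + (Dset n m π).card + 1 + (i - (m + (Dset n m π).card) - 1) = i
        from by omega] at this
      exact this

lemma recon : phi n m (Aset n m π) (Dset n m π)
    (gfun_bij h2 hm hn (Aset_subset n m π h2 hm hn) (card_Aset n m π h2 hm hn)
      (vD_of h2 hm hn hQ)) = π := by
  apply perm_ext_of_uval
  intro i hi
  rw [Finset.mem_Icc] at hi
  rw [uval_phi h2 hm hn (Aset_subset n m π h2 hm hn) (card_Aset n m π h2 hm hn)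
    (vD_of h2 hm hn hQ) i hi.1 hi.2]
  exact (recon_val h2 hm hn hQ i hi.1 hi.2).symm

end Reconstruction

end Stmt16Aux
namespace Stmt16Aux

/-- the target indexing finset -/
def TT (n m : ℕ) : Finset (Σ _ : Finset ℕ, Finset ℕ) :=
  (Finset.powersetCard (m - 1) (Finset.Icc 1 n)).sigma
    (fun A => ((Bset n m A).erase (bm (Bset n m A))).powerset)

lemma card_TT (n m : ℕ) (h2 : 2 ≤ m) (hm : m ≤ n - 1) (hn : 3 ≤ n) :
    (TT n m).card = Nat.choose n (m - 1) * 2 ^ (n - m) := by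
  rw [TT, Finset.card_sigma]
  have hterm : ∀ A ∈ Finset.powersetCard (m - 1) (Finset.Icc 1 n),
      ((Bset n m A).erase (bm (Bset n m A))).powerset.card = 2 ^ (n - m) := by
    intro A hA
    rw [Finset.mem_powersetCard] at hA
    have hcB : (Bset n m A).card = n - m + 1 := by
      rw [Bset, Finset.card_sdiff_of_subset hA.1, Nat.card_Icc, hA.2]
      omega
    have hBne : (Bset n m A).Nonempty := by
      rw [← Finset.card_pos, hcB]; omega
    rw [Finset.card_powerset, Finset.card_erase_of_mem (bm_mem hBne), hcB]
    congr 1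
  rw [Finset.sum_congr rfl hterm, Finset.sum_const, Finset.card_powersetCard, Nat.card_Icc,
    show n + 1 - 1 = n from by omega, smul_eq_mul]

lemma count_Q (n m : ℕ) (h2 : 2 ≤ m) (hm : m ≤ n - 1) (hn : 3 ≤ n) :
    (Finset.univ.filter fun π : Equiv.Perm (Fin n) =>
        sPeakSetHat n π ⊆ {m - 1, m}).card
      = Nat.choose n (m - 1) * 2 ^ (n - m) := by
  rw [← card_TT n m h2 hm hn]
  refine Finset.card_bij'
    (fun π _ => (⟨Aset n m π, Dset n m π⟩ : Σ _ : Finset ℕ, Finset ℕ))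
    (fun a ha => phi n m a.1 a.2 (gfun_bij h2 hm hn
      (by
        have := Finset.mem_sigma.mp ha
        exact (Finset.mem_powersetCard.mp this.1).1)
      (by
        have := Finset.mem_sigma.mp ha
        exact (Finset.mem_powersetCard.mp this.1).2)
      (by
        have := Finset.mem_sigma.mp ha
        exact Finset.mem_powerset.mp this.2)))
    ?_ ?_ ?_ ?_
  · intro π hπ
    rw [Finset.mem_filter] at hπ
    have hQ := (peak_subset_iff n m π h2 hm hn).mp hπ.2
    rw [TT, Finset.mem_sigma]
    constructor
    · rw [Finset.mem_powersetCard]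
      exact ⟨Aset_subset n m π h2 hm hn, card_Aset n m π h2 hm hn⟩
    · rw [Finset.mem_powerset]
      exact vD_of h2 hm hn hQ
  · intro a ha
    have hs := Finset.mem_sigma.mp ha
    refine Finset.mem_filter.mpr ⟨Finset.mem_univ _, ?_⟩
    rw [peak_subset_iff n m _ h2 hm hn]
    exact Q_phi h2 hm hn (Finset.mem_powersetCard.mp hs.1).1
      (Finset.mem_powersetCard.mp hs.1).2 (Finset.mem_powerset.mp hs.2)
  · intro π hπ
    rw [Finset.mem_filter] at hπ
    have hQ := (peak_subset_iff n m π h2 hm hn).mp hπ.2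
    exact recon h2 hm hn hQ
  · intro a ha
    have h1 := Aset_phi h2 hm hn
      (by have := Finset.mem_sigma.mp ha; exact (Finset.mem_powersetCard.mp this.1).1)
      (by have := Finset.mem_sigma.mp ha; exact (Finset.mem_powersetCard.mp this.1).2)
      (by have := Finset.mem_sigma.mp ha; exact Finset.mem_powerset.mp this.2)
    have h2' := Dset_phi h2 hm hn
      (by have := Finset.mem_sigma.mp ha; exact (Finset.mem_powersetCard.mp this.1).1)
      (by have := Finset.mem_sigma.mp ha; exact (Finset.mem_powersetCard.mp this.1).2)
      (by have := Finset.mem_sigma.mp ha; exact Finset.mem_powerset.mp this.2)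
    exact Sigma.ext h1 (heq_of_eq h2')

end Stmt16Aux
namespace Stmt16Aux

lemma not_both_peaks (n m : ℕ) (π : Equiv.Perm (Fin n)) (h2 : 2 ≤ m) :
    ¬(m - 1 ∈ sPeakSetHat n π ∧ m ∈ sPeakSetHat n π) := by
  rintro ⟨ha, hb⟩
  rw [mem_peakHat] at ha hb
  have h1 := ha.2.2
  rw [show m - 1 + 1 = m from by omega] at h1
  have h2' := hb.2.1
  omega

lemma partition3 (n m : ℕ) (h2 : 2 ≤ m) (hm : m ≤ n - 1) (hn : 3 ≤ n) :
    (Finset.univ.filter fun π : Equiv.Perm (Fin n) =>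
        sPeakSetHat n π ⊆ {m - 1, m}).card
      = PPhat n {m} + PPhat n {m - 1} + PPhat n ∅ := by
  have hne : m - 1 ≠ m := by omega
  have hsplit : (Finset.univ.filter fun π : Equiv.Perm (Fin n) =>
        sPeakSetHat n π ⊆ {m - 1, m})
      = ((Finset.univ.filter fun π : Equiv.Perm (Fin n) => sPeakSetHat n π = {m})
          ∪ (Finset.univ.filter fun π : Equiv.Perm (Fin n) => sPeakSetHat n π = {m - 1}))
        ∪ (Finset.univ.filter fun π : Equiv.Perm (Fin n) => sPeakSetHat n π = ∅) := by
    ext π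
    simp only [Finset.mem_filter, Finset.mem_union, Finset.mem_univ, true_and]
    constructor
    · intro hsub
      by_cases hm1 : m ∈ sPeakSetHat n π <;> by_cases hm2 : m - 1 ∈ sPeakSetHat n π
      · exact absurd ⟨hm2, hm1⟩ (not_both_peaks n m π h2)
      · left; left
        apply Finset.Subset.antisymm
        · intro x hx
          have := hsub hx
          rw [Finset.mem_insert, Finset.mem_singleton] at this
          rw [Finset.mem_singleton]
          rcases this with h | h
          · exact absurd (h ▸ hx) hm2
          · exact h
        · rw [Finset.singleton_subset_iff]; exact hm1
      · left; right
        apply Finset.Subset.antisymm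
        · intro x hx
          have := hsub hx
          rw [Finset.mem_insert, Finset.mem_singleton] at this
          rw [Finset.mem_singleton]
          rcases this with h | h
          · exact h
          · exact absurd (h ▸ hx) hm1
        · rw [Finset.singleton_subset_iff]; exact hm2
      · right
        rw [Finset.eq_empty_iff_forall_notMem]
        intro x hx
        have := hsub hx
        rw [Finset.mem_insert, Finset.mem_singleton] at this
        rcases this with h | h
        · exact hm2 (h ▸ hx)
        · exact hm1 (h ▸ hx)
    · rintro ((h | h) | h) <;> rw [h]
      · intro x hx
        rw [Finset.mem_singleton] at hx
        rw [Finset.mem_insert, Finset.mem_singleton]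
        right; exact hx
      · intro x hx
        rw [Finset.mem_singleton] at hx
        rw [Finset.mem_insert, Finset.mem_singleton]
        left; exact hx
      · exact Finset.empty_subset _
  rw [hsplit]
  have hd1 : Disjoint (Finset.univ.filter fun π : Equiv.Perm (Fin n) => sPeakSetHat n π = {m})
      (Finset.univ.filter fun π : Equiv.Perm (Fin n) => sPeakSetHat n π = {m - 1}) := by
    rw [Finset.disjoint_left]
    intro π hπ1 hπ2
    rw [Finset.mem_filter] at hπ1 hπ2
    have := hπ1.2 ▸ hπ2.2
    rw [Finset.singleton_inj] at this
    omega
  have hd2 : Disjoint ((Finset.univ.filter fun π : Equiv.Perm (Fin n) => sPeakSetHat n π = {m})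
        ∪ (Finset.univ.filter fun π : Equiv.Perm (Fin n) => sPeakSetHat n π = {m - 1}))
      (Finset.univ.filter fun π : Equiv.Perm (Fin n) => sPeakSetHat n π = ∅) := by
    rw [Finset.disjoint_left]
    intro π hπ1 hπ2
    rw [Finset.mem_union, Finset.mem_filter, Finset.mem_filter] at hπ1
    rw [Finset.mem_filter] at hπ2
    rcases hπ1 with h | h
    · exact Finset.singleton_ne_empty m (h.2 ▸ hπ2.2)
    · exact Finset.singleton_ne_empty (m - 1) (h.2 ▸ hπ2.2)
  rw [Finset.card_union_of_disjoint hd2, Finset.card_union_of_disjoint hd1]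
  rfl

end Stmt16Aux

/-- recursion `#P̂({m},n) = 2^(n-m)·C(n,m-1) - #P̂({m-1},n) - 1` for `m ≥ 2`. -/
theorem stmt16 (n m : ℕ) (h2 : 2 ≤ m) (hm : m ≤ n - 1) :
    (PPhat n {m} : ℤ)
      = 2 ^ (n - m) * Nat.choose n (m - 1) - PPhat n {m - 1} - 1 := by
  have hn : 3 ≤ n := by omega
  have h7 := Stmt16Aux.count_Q n m h2 hm hn
  have h8 := Stmt16Aux.partition3 n m h2 hm hn
  have h9 := Stmt16Aux.PPhat_empty n (by omega)
  have hkey : PPhat n {m} + PPhat n {m - 1} + 1 = Nat.choose n (m - 1) * 2 ^ (n - m) := by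
    omega
  have := congrArg (Nat.cast : ℕ → ℤ) hkey
  push_cast at this
  linarith
end
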